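/- arXiv:1107.2319 — 8 statements merged into one kernel-verified Lean document; each statement's English description precedes it below -/
import Mathlib

section
/- Let L₁, L₂ ⊆ ℝ² be convex bodies with 0 in their interiors such that for some constants c₊, c₋ > 0: ρ_{L_i}(e₁) = h_{L_i}(e₁) = c₊ and ρ_{L_i}(−e₁) = h_{L_i}(−e₁) = c₋ for i = 1,2. Then L := (L₁ ∩ H⁺) ∪ (L₂ ∩ H⁻) is a convex body with 0 ∈ int(L), and L* = (L₂* ∩ H⁺) ∪ (L₁* ∩ H⁻). -/
open RealInnerProductSpace Set
open scoped ENNReal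

noncomputable section

abbrev Eu (n : ℕ) := EuclideanSpace ℝ (Fin n)

/-- The dual of a set: `C* = {u | 1 + ⟪u,v⟫ ≥ 0 for all v ∈ C}`. -/
def dualSet {n : ℕ} (C : Set (Eu n)) : Set (Eu n) := {u | ∀ v ∈ C, 0 ≤ 1 + ⟪u, v⟫}

/-- The polar of a set: `C° = {u | ⟪u,v⟫ ≤ 1 for all v ∈ C}`. -/
def polarSet {n : ℕ} (C : Set (Eu n)) : Set (Eu n) := {u | ∀ v ∈ C, ⟪u, v⟫ ≤ 1}

/-- The support function `h_C(u) = sup {⟪x,u⟫ | x ∈ C}`. -/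
def supp {n : ℕ} (C : Set (Eu n)) (u : Eu n) : ℝ := sSup ((fun x => ⟪x, u⟫) '' C)

/-- The radial function `ρ_K(u) = sup {λ ≥ 0 | λ • u ∈ K}`. -/
def radial {n : ℕ} (K : Set (Eu n)) (u : Eu n) : ℝ := sSup {l : ℝ | 0 ≤ l ∧ l • u ∈ K}

/-- The normal cone of `C` at `x`. -/
def normalCone {n : ℕ} (C : Set (Eu n)) (x : Eu n) : Set (Eu n) :=
  {u | ∀ y ∈ C, ⟪u, y - x⟫ ≤ 0}

/-- `F` is a face of the convex set `C`. -/
def IsFace {n : ℕ} (C F : Set (Eu n)) : Prop :=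
  F ⊆ C ∧ Convex ℝ F ∧ ∀ x ∈ C, ∀ z ∈ C, ∀ y ∈ F, y ∈ openSegment ℝ x z → x ∈ F ∧ z ∈ F

/-- `F` is an exposed face of `C`: it is `∅`, `C`, or `C ∩ H_C(u)` for some nonzero `u`. -/
def IsExposedFace {n : ℕ} (C F : Set (Eu n)) : Prop :=
  F = ∅ ∨ F = C ∨ ∃ u : Eu n, u ≠ 0 ∧ F = {x ∈ C | ⟪x, u⟫ = supp C u}

/-- The conjugate face of a subset `F` of `C`, inside the polar body. -/
def conjFace {n : ℕ} (C F : Set (Eu n)) : Set (Eu n) :=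
  {v ∈ polarSet C | ∀ u ∈ F, ⟪v, u⟫ = 1}

/-- The positive hull: `pos(X) = {λx | λ ≥ 0, x ∈ X}` for nonempty `X`, and `pos ∅ = {0}`. -/
def posHull {n : ℕ} (X : Set (Eu n)) : Set (Eu n) :=
  {w | w = 0 ∨ ∃ l : ℝ, 0 ≤ l ∧ ∃ x ∈ X, w = l • x}

def e₁ : Eu 2 := EuclideanSpace.single 0 1

/-- The closed upper half-plane. -/
def Hplus : Set (Eu 2) := {p | 0 ≤ p 1}

/-- The closed lower half-plane. -/
def Hminus : Set (Eu 2) := {p | p 1 ≤ 0}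

/-!
Both bodies contain the axis segment `[-c₋, c₊] • e₁`, whose endpoints are the attained radii,
and the support values confine their first coordinates to `[-c₋, c₊]`; so the orthogonal
projection `π` onto the axis maps `L₁ ∪ L₂` into `L₁ ∩ L₂`. A segment from the upper half of
`L₁` to the lower half of `L₂` crosses the axis at a point of `L₁ ∩ L₂`, which splits it into a
piece of `L₁ ∩ H⁺` and a piece of `L₂ ∩ H⁻`. For the dual, `⟪u, v⟫ = ⟪u, π v⟫ + u₂ v₂`: when
`u₂ v₂ ≥ 0` the constraint from `v` follows from the one from `π v`, and otherwise `v` lies in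
the half that `u` is tested against.
-/

section HalfSpaces

variable {E : Type*} [AddCommGroup E] [Module ℝ E] (f : E →ₗ[ℝ] ℝ)

lemma exists_mem_segment_apply_eq_zero {z y : E} (hz : 0 ≤ f z) (hy : f y ≤ 0) :
    ∃ m ∈ segment ℝ z y, f m = 0 := by
  have h0 : (0 : ℝ) ∈ f.toAffineMap '' segment ℝ z y := by
    rw [image_segment, LinearMap.coe_toAffineMap, segment_symm, segment_eq_Icc (hy.trans hz)]
    exact ⟨hy, hz⟩
  simpa using h0

lemma Convex.mem_of_mem_segment_of_nonneg {K : Set E} (hK : Convex ℝ K) {x y z : E} (hx : x ∈ K)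
    (hy : f y ≤ 0) (hcross : ∀ m ∈ segment ℝ x y, f m = 0 → m ∈ K)
    (hz : z ∈ segment ℝ x y) (hfz : 0 ≤ f z) : z ∈ K := by
  obtain ⟨m, hm, hfm⟩ := exists_mem_segment_apply_eq_zero f hfz hy
  have hmK : m ∈ K :=
    hcross m ((convex_segment x y).segment_subset hz (right_mem_segment ℝ x y) hm) hfm
  have hzm : z ∈ segment ℝ x m := by
    rw [mem_segment_iff_wbtw] at hz hm ⊢
    exact hz.trans_right_left hm
  exact hK.segment_subset hx hmK hzm

theorem convex_union_inter_halfSpaces {K₁ K₂ C : Set E} (h₁ : Convex ℝ K₁) (h₂ : Convex ℝ K₂)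
    (hC : Convex ℝ C) (hKC : K₁ ∪ K₂ ⊆ C) (hCK : C ∩ {x | f x = 0} ⊆ K₁ ∩ K₂) :
    Convex ℝ ((K₁ ∩ {x | 0 ≤ f x}) ∪ (K₂ ∩ {x | f x ≤ 0})) := by
  have mixed : ∀ x ∈ K₁, ∀ y ∈ K₂, 0 ≤ f x → f y ≤ 0 →
      segment ℝ x y ⊆ (K₁ ∩ {x | 0 ≤ f x}) ∪ (K₂ ∩ {x | f x ≤ 0}) := by
    intro x hx y hy hfx hfy z hz
    have hcross : ∀ m ∈ segment ℝ x y, f m = 0 → m ∈ K₁ ∩ K₂ := fun m hm hfm =>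
      hCK ⟨hC.segment_subset (hKC (.inl hx)) (hKC (.inr hy)) hm, hfm⟩
    rcases le_total 0 (f z) with hfz | hfz
    · exact .inl ⟨h₁.mem_of_mem_segment_of_nonneg f hx hfy
        (fun m hm hfm => (hcross m hm hfm).1) hz hfz, hfz⟩
    · rw [segment_symm] at hcross hz
      exact .inr ⟨h₂.mem_of_mem_segment_of_nonneg (-f) hy (by simpa using hfx)
        (fun m hm hfm => (hcross m hm (by simpa using hfm)).2) hz (by simpa using hfz), hfz⟩
  rw [convex_iff_segment_subset]
  rintro x (⟨hx₁, hfx⟩ | ⟨hx₂, hfx⟩) y (⟨hy₁, hfy⟩ | ⟨hy₂, hfy⟩)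
  · exact ((h₁.inter (convex_halfSpace_ge f.isLinear 0)).segment_subset
      ⟨hx₁, hfx⟩ ⟨hy₁, hfy⟩).trans subset_union_left
  · exact mixed x hx₁ y hy₂ hfx hfy
  · rw [segment_symm]
    exact mixed y hy₁ x hx₂ hfy hfx
  · exact ((h₂.inter (convex_halfSpace_le f.isLinear 0)).segment_subset
      ⟨hx₂, hfx⟩ ⟨hy₂, hfy⟩).trans subset_union_right

lemma Convex.smul_mem_of_mem_Icc {K : Set E} (hK : Convex ℝ K) {v : E} {a b t : ℝ}
    (ha : a • v ∈ K) (hb : b • v ∈ K) (ht : t ∈ Icc a b) : t • v ∈ K := by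
  refine hK.segment_subset ha hb ?_
  rw [← segment_eq_Icc (ht.1.trans ht.2)] at ht
  have := mem_image_of_mem (LinearMap.toSpanSingleton ℝ E v).toAffineMap ht
  rwa [image_segment] at this

end HalfSpaces

lemma radial_smul_mem {n : ℕ} {K : Set (Eu n)} (hK : IsCompact K) (h0 : (0 : Eu n) ∈ K)
    {u : Eu n} (hu : u ≠ 0) : radial K u • u ∈ K := by
  have hS : IsCompact {l : ℝ | 0 ≤ l ∧ l • u ∈ K} :=
    ((isClosedEmbedding_smul_left hu).isCompact_preimage hK).inter_left isClosed_Ici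
  exact (hS.sSup_mem ⟨0, le_rfl, by simpa using h0⟩).2

lemma e₁_ne_zero : e₁ ≠ 0 := by simp [e₁]

lemma smul_e₁_mem_of_mem_Icc_radial {K : Set (Eu 2)} (hK : IsCompact K) (hv : Convex ℝ K)
    (h0 : (0 : Eu 2) ∈ K) {t : ℝ} (ht : t ∈ Icc (-radial K (-e₁)) (radial K e₁)) :
    t • e₁ ∈ K := by
  have hneg := radial_smul_mem hK h0 (neg_ne_zero.2 e₁_ne_zero)
  rw [smul_neg, ← neg_smul] at hneg
  exact hv.smul_mem_of_mem_Icc hneg (radial_smul_mem hK h0 e₁_ne_zero) ht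

lemma inner_e₁ (x : Eu 2) : ⟪x, e₁⟫ = x 0 := by simp [e₁, EuclideanSpace.inner_single_right]

lemma apply_zero_mem_Icc_supp {K : Set (Eu 2)} (hK : IsCompact K) {x : Eu 2} (hx : x ∈ K) :
    x 0 ∈ Icc (-supp K (-e₁)) (supp K e₁) := by
  have hbdd (u : Eu 2) : BddAbove ((fun x => ⟪x, u⟫) '' K) :=
    (hK.image (continuous_id.inner continuous_const)).bddAbove
  have hright : ⟪x, e₁⟫ ≤ supp K e₁ := le_csSup (hbdd e₁) (mem_image_of_mem _ hx)
  have hleft : ⟪x, -e₁⟫ ≤ supp K (-e₁) := le_csSup (hbdd (-e₁)) (mem_image_of_mem _ hx)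
  rw [inner_neg_right, inner_e₁] at hleft
  rw [inner_e₁] at hright
  exact ⟨by linarith, hright⟩

lemma eq_smul_e₁ {p : Eu 2} (hp : p 1 = 0) : p = p 0 • e₁ := by
  ext i
  fin_cases i <;> simp [e₁, hp]

lemma inner_eq_inner_smul_e₁_add (u v : Eu 2) : ⟪u, v⟫ = ⟪u, v 0 • e₁⟫ + u 1 * v 1 := by
  simp [e₁, PiLp.inner_apply, Fin.sum_univ_two, mul_comm]

theorem dualSet_union_inter_halfPlanes {K₁ K₂ : Set (Eu 2)}
    (hproj : ∀ v ∈ K₁ ∪ K₂, v 0 • e₁ ∈ K₁ ∩ K₂) :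
    dualSet ((K₁ ∩ Hplus) ∪ (K₂ ∩ Hminus)) = (dualSet K₂ ∩ Hplus) ∪ (dualSet K₁ ∩ Hminus) := by
  have hmem : ∀ v ∈ K₁ ∪ K₂, v 0 • e₁ ∈ (K₁ ∩ Hplus) ∪ (K₂ ∩ Hminus) := fun v hv =>
    .inl ⟨(hproj v hv).1, by simp [Hplus, e₁]⟩
  have hsplit : ∀ u v : Eu 2, 0 ≤ 1 + ⟪u, v 0 • e₁⟫ → 0 ≤ u 1 * v 1 → 0 ≤ 1 + ⟪u, v⟫ :=
    fun u v h huv => by rw [inner_eq_inner_smul_e₁_add]; linarith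
  ext u
  constructor
  · intro hu
    rcases le_total 0 (u 1) with hu1 | hu1
    · refine .inl ⟨fun v hv => ?_, hu1⟩
      rcases le_total (v 1) 0 with hv1 | hv1
      · exact hu v (.inr ⟨hv, hv1⟩)
      · exact hsplit u v (hu _ (hmem v (.inr hv))) (mul_nonneg hu1 hv1)
    · refine .inr ⟨fun v hv => ?_, hu1⟩
      rcases le_total 0 (v 1) with hv1 | hv1
      · exact hu v (.inl ⟨hv, hv1⟩)
      · exact hsplit u v (hu _ (hmem v (.inl hv))) (mul_nonneg_of_nonpos_of_nonpos hu1 hv1)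
  · rintro (⟨hu, hu1⟩ | ⟨hu, hu1⟩) v (⟨hv, hv1⟩ | ⟨hv, hv1⟩)
    · exact hsplit u v (hu _ (hproj v (.inl hv)).2) (mul_nonneg hu1 hv1)
    · exact hu v hv
    · exact hu v hv
    · exact hsplit u v (hu _ (hproj v (.inr hv)).1) (mul_nonneg_of_nonpos_of_nonpos hu1 hv1)

theorem stmt6_general (L₁ L₂ : Set (Eu 2))
    (h₁c : IsCompact L₁) (h₁v : Convex ℝ L₁) (h₁0 : (0 : Eu 2) ∈ interior L₁)
    (h₂c : IsCompact L₂) (h₂v : Convex ℝ L₂) (h₂0 : (0 : Eu 2) ∈ interior L₂)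
    (cp cm : ℝ)
    (h1p : radial L₁ e₁ = cp) (h1ps : supp L₁ e₁ = cp)
    (h1m : radial L₁ (-e₁) = cm) (h1ms : supp L₁ (-e₁) = cm)
    (h2p : radial L₂ e₁ = cp) (h2ps : supp L₂ e₁ = cp)
    (h2m : radial L₂ (-e₁) = cm) (h2ms : supp L₂ (-e₁) = cm) :
    IsCompact ((L₁ ∩ Hplus) ∪ (L₂ ∩ Hminus)) ∧
    Convex ℝ ((L₁ ∩ Hplus) ∪ (L₂ ∩ Hminus)) ∧
    (0 : Eu 2) ∈ interior ((L₁ ∩ Hplus) ∪ (L₂ ∩ Hminus)) ∧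
    dualSet ((L₁ ∩ Hplus) ∪ (L₂ ∩ Hminus)) =
      (dualSet L₂ ∩ Hplus) ∪ (dualSet L₁ ∩ Hminus) := by
  have hstrip : ∀ v ∈ L₁ ∪ L₂, v 0 ∈ Icc (-cm) cp := by
    rintro v (hv | hv)
    · simpa [h1ps, h1ms] using apply_zero_mem_Icc_supp h₁c hv
    · simpa [h2ps, h2ms] using apply_zero_mem_Icc_supp h₂c hv
  have haxis : ∀ t ∈ Icc (-cm) cp, t • e₁ ∈ L₁ ∩ L₂ := fun t ht =>
    ⟨smul_e₁_mem_of_mem_Icc_radial h₁c h₁v (interior_subset h₁0) (by rwa [h1p, h1m]),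
      smul_e₁_mem_of_mem_Icc_radial h₂c h₂v (interior_subset h₂0) (by rwa [h2p, h2m])⟩
  have hproj₁ := (EuclideanSpace.proj (1 : Fin 2) : Eu 2 →L[ℝ] ℝ).continuous
  refine ⟨(h₁c.inter_right (isClosed_Ici.preimage hproj₁)).union
      (h₂c.inter_right (isClosed_Iic.preimage hproj₁)), ?_, ?_,
    dualSet_union_inter_halfPlanes fun v hv => haxis _ (hstrip v hv)⟩
  · exact convex_union_inter_halfSpaces (EuclideanSpace.projₗ 1) h₁v h₂v
      ((convex_Icc (-cm) cp).linear_preimage (EuclideanSpace.projₗ 0))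
      hstrip fun p ⟨hp, hp1⟩ => eq_smul_e₁ hp1 ▸ haxis _ hp
  · have h0 : (0 : Eu 2) ∈ interior (L₁ ∩ L₂) := interior_inter (s := L₁) ▸ ⟨h₁0, h₂0⟩
    refine interior_mono ?_ h0
    rintro p ⟨hp₁, hp₂⟩
    exact (le_total 0 (p 1)).imp (⟨hp₁, ·⟩) (⟨hp₂, ·⟩)

/-- gluing upper and lower halves of two convex bodies with equal
x-extension gives a convex body, whose dual is the glueing of the swapped duals. -/
theorem stmt6 (L₁ L₂ : Set (Eu 2))
    (h₁c : IsCompact L₁) (h₁v : Convex ℝ L₁) (h₁0 : (0 : Eu 2) ∈ interior L₁)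
    (h₂c : IsCompact L₂) (h₂v : Convex ℝ L₂) (h₂0 : (0 : Eu 2) ∈ interior L₂)
    (cp cm : ℝ) (hcp : 0 < cp) (hcm : 0 < cm)
    (h1p : radial L₁ e₁ = cp) (h1ps : supp L₁ e₁ = cp)
    (h1m : radial L₁ (-e₁) = cm) (h1ms : supp L₁ (-e₁) = cm)
    (h2p : radial L₂ e₁ = cp) (h2ps : supp L₂ e₁ = cp)
    (h2m : radial L₂ (-e₁) = cm) (h2ms : supp L₂ (-e₁) = cm) :
    IsCompact ((L₁ ∩ Hplus) ∪ (L₂ ∩ Hminus)) ∧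
    Convex ℝ ((L₁ ∩ Hplus) ∪ (L₂ ∩ Hminus)) ∧
    (0 : Eu 2) ∈ interior ((L₁ ∩ Hplus) ∪ (L₂ ∩ Hminus)) ∧
    dualSet ((L₁ ∩ Hplus) ∪ (L₂ ∩ Hminus)) =
      (dualSet L₂ ∩ Hplus) ∪ (dualSet L₁ ∩ Hminus) :=
  stmt6_general L₁ L₂ h₁c h₁v h₁0 h₂c h₂v h₂0 cp cm h1p h1ps h1m h1ms h2p h2ps h2m h2ms
end
end

section
/- For every planar self-dual convex body K there exists a rotation ψ ∈ SO(2) and λ ∈ ℝ such that ρ_{ψ(K)}(e₁) = h_{ψ(K)}(e₁) = e^λ and ρ_{ψ(K)}(−e₁) = h_{ψ(K)}(−e₁) = e^{−λ}. -/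
open RealInnerProductSpace Set
open scoped ENNReal

noncomputable section

/-! A farthest point `x = r • u` of `K` from the origin gives `ρ_K(u) = h_K(u) = r`, with `u` a unit
vector. Self-duality turns the bound `⟪y, u⟫ ≤ r` on `K` into `r⁻¹ • (-u) ∈ K`, and the point
`r • u ∈ K` into the bound `⟪y, -u⟫ ≤ r⁻¹` on `K`, so `ρ_K(-u) = h_K(-u) = r⁻¹`. A rotation taking
`u` to `e₁` preserves radial and support functions, and `λ = log r`. -/

section

variable {n : ℕ}

theorem zero_mem_dualSet (C : Set (Eu n)) : 0 ∈ dualSet C := fun v _ => by simp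

theorem exists_mem_ne_zero_of_dualSet_eq [NeZero n] {K : Set (Eu n)} (hsd : dualSet K = K) :
    ∃ x ∈ K, x ≠ 0 := by
  by_contra! hK
  obtain ⟨v, hv⟩ := exists_ne (0 : Eu n)
  have hv' : v ∈ dualSet K := fun y hy => by simp [hK y hy]
  exact hv (hK v (hsd ▸ hv'))

theorem inv_smul_neg_mem_dualSet {C : Set (Eu n)} {w : Eu n} {s : ℝ} (hs : 0 < s)
    (hw : ∀ y ∈ C, ⟪y, w⟫ ≤ s) : s⁻¹ • -w ∈ dualSet C := by
  intro y hy
  rw [real_inner_smul_left, inner_neg_left, real_inner_comm]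
  have := inv_mul_le_one_of_le₀ (hw y hy) hs.le
  linarith

theorem inner_neg_le_inv_of_mem_dualSet {C : Set (Eu n)} {w y : Eu n} {s : ℝ} (hs : 0 < s)
    (hw : s • w ∈ C) (hy : y ∈ dualSet C) : ⟪y, -w⟫ ≤ s⁻¹ := by
  have := hy _ hw
  rw [real_inner_smul_right] at this
  rw [inner_neg_right, ← one_div, le_div_iff₀ hs]
  linarith

theorem radial_eq_of_smul_mem {K : Set (Eu n)} {w : Eu n} {s : ℝ} (hw : ‖w‖ = 1) (hs : 0 ≤ s)
    (hsw : s • w ∈ K) (hK : ∀ y ∈ K, ⟪y, w⟫ ≤ s) : radial K w = s := by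
  refine IsGreatest.csSup_eq ⟨⟨hs, hsw⟩, fun l ⟨_, hl⟩ => ?_⟩
  simpa [real_inner_smul_left, real_inner_self_eq_norm_sq, hw] using hK _ hl

theorem supp_eq_of_smul_mem {K : Set (Eu n)} {w : Eu n} {s : ℝ} (hw : ‖w‖ = 1)
    (hsw : s • w ∈ K) (hK : ∀ y ∈ K, ⟪y, w⟫ ≤ s) : supp K w = s := by
  refine IsGreatest.csSup_eq ⟨⟨s • w, hsw, ?_⟩, ?_⟩
  · simp [real_inner_smul_left, hw]
  · rintro _ ⟨y, hy, rfl⟩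
    exact hK y hy

theorem radial_image_linearIsometryEquiv (ψ : Eu n ≃ₗᵢ[ℝ] Eu n) (K : Set (Eu n)) (w : Eu n) :
    radial (ψ '' K) (ψ w) = radial K w := by
  simp only [radial, ← map_smul, ψ.injective.mem_set_image]

theorem supp_image_linearIsometryEquiv (ψ : Eu n ≃ₗᵢ[ℝ] Eu n) (K : Set (Eu n)) (w : Eu n) :
    supp (ψ '' K) (ψ w) = supp K w := by
  simp only [supp, image_image, LinearIsometryEquiv.inner_map_map]

theorem exists_unit_radial_eq_supp_of_dualSet_eq [NeZero n] {K : Set (Eu n)} (hK : IsCompact K)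
    (hsd : dualSet K = K) :
    ∃ u : Eu n, ‖u‖ = 1 ∧ ∃ r > 0, radial K u = r ∧ supp K u = r ∧
      radial K (-u) = r⁻¹ ∧ supp K (-u) = r⁻¹ := by
  obtain ⟨x, hxK, hxmax⟩ :=
    hK.exists_isMaxOn ⟨0, hsd ▸ zero_mem_dualSet K⟩ continuous_norm.continuousOn
  obtain ⟨z, hzK, hz⟩ := exists_mem_ne_zero_of_dualSet_eq hsd
  set r := ‖x‖
  have hr : 0 < r := (norm_pos_iff.2 hz).trans_le (hxmax hzK)
  set u := r⁻¹ • x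
  have hu : ‖u‖ = 1 := by simp [u, norm_smul, r, hr.ne']
  have hru : r • u ∈ K := by simpa [u, smul_smul, hr.ne'] using hxK
  have hle : ∀ y ∈ K, ⟪y, u⟫ ≤ r := fun y hy =>
    (real_inner_le_norm y u).trans (by rw [hu, mul_one]; exact hxmax hy)
  have hneg : r⁻¹ • -u ∈ K := by
    rw [← hsd]
    exact inv_smul_neg_mem_dualSet hr hle
  have hle_neg : ∀ y ∈ K, ⟪y, -u⟫ ≤ r⁻¹ := fun y hy =>
    inner_neg_le_inv_of_mem_dualSet hr hru (by rwa [hsd])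
  have hu_neg : ‖-u‖ = 1 := by rw [norm_neg, hu]
  exact ⟨u, hu, r, hr, radial_eq_of_smul_mem hu hr.le hru hle, supp_eq_of_smul_mem hu hru hle,
    radial_eq_of_smul_mem hu_neg (inv_pos.2 hr).le hneg hle_neg,
    supp_eq_of_smul_mem hu_neg hneg hle_neg⟩

end

theorem exists_rotation_apply_eq {u v : Eu 2} (h : ‖u‖ = ‖v‖) :
    ∃ ψ : Eu 2 ≃ₗᵢ[ℝ] Eu 2, LinearMap.det (ψ.toLinearEquiv : Eu 2 →ₗ[ℝ] Eu 2) = 1 ∧ ψ u = v := by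
  have : Fact (Module.finrank ℝ (Eu 2) = 2) := ⟨finrank_euclideanSpace_fin⟩
  let o : Orientation ℝ (Eu 2) (Fin 2) := (EuclideanSpace.basisFun (Fin 2) ℝ).toBasis.orientation
  exact ⟨o.rotation (o.oangle u v), o.det_rotation _, (o.rotation_oangle_eq_iff_norm_eq u v).2 h⟩

theorem stmt8_general (K : Set (Eu 2)) (hK : IsCompact K)
    (hsd : dualSet K = K) :
    ∃ ψ : Eu 2 ≃ₗᵢ[ℝ] Eu 2, LinearMap.det (ψ.toLinearEquiv : Eu 2 →ₗ[ℝ] Eu 2) = 1 ∧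
      ∃ l : ℝ, radial (ψ '' K) e₁ = Real.exp l ∧ supp (ψ '' K) e₁ = Real.exp l ∧
        radial (ψ '' K) (-e₁) = Real.exp (-l) ∧ supp (ψ '' K) (-e₁) = Real.exp (-l) := by
  obtain ⟨u, hu, r, hr, hρ, hh, hρ_neg, hh_neg⟩ := exists_unit_radial_eq_supp_of_dualSet_eq hK hsd
  obtain ⟨ψ, hdet, hψ⟩ := exists_rotation_apply_eq (u := u) (v := e₁) (by simp [hu, e₁])
  have hψ_neg : ψ (-u) = -e₁ := by rw [map_neg, hψ]
  have hexp_neg : Real.exp (-Real.log r) = r⁻¹ := by rw [Real.exp_neg, Real.exp_log hr]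
  refine ⟨ψ, hdet, Real.log r, ?_, ?_, ?_, ?_⟩
  · rw [← hψ, radial_image_linearIsometryEquiv, hρ, Real.exp_log hr]
  · rw [← hψ, supp_image_linearIsometryEquiv, hh, Real.exp_log hr]
  · rw [← hψ_neg, radial_image_linearIsometryEquiv, hρ_neg, hexp_neg]
  · rw [← hψ_neg, supp_image_linearIsometryEquiv, hh_neg, hexp_neg]

/-- every planar self-dual convex body can be rotated so that its radial
and support function in the directions `±e₁` are `e^{±λ}`. -/
theorem stmt8 (K : Set (Eu 2)) (hK : IsCompact K) (hconv : Convex ℝ K)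
    (hsd : dualSet K = K) :
    ∃ ψ : Eu 2 ≃ₗᵢ[ℝ] Eu 2, LinearMap.det (ψ.toLinearEquiv : Eu 2 →ₗ[ℝ] Eu 2) = 1 ∧
      ∃ l : ℝ, radial (ψ '' K) e₁ = Real.exp l ∧ supp (ψ '' K) e₁ = Real.exp l ∧
        radial (ψ '' K) (-e₁) = Real.exp (-l) ∧ supp (ψ '' K) (-e₁) = Real.exp (-l) :=
  stmt8_general K hK hsd
end
end

section
/- Let K ⊆ ℝ² be a self-dual convex body and let u ∈ K be a point of maximal Euclidean norm in K, with v := u/|u|. Then ρ_K(v) = h_K(v) and ρ_K(−v) = h_K(−v) = 1/ρ_K(v). -/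
open RealInnerProductSpace Set
open scoped ENNReal

noncomputable section

/-!
If `K* = K`, then `-1 ≤ ⟪x, y⟫` for all `x, y ∈ K`. For a point `u ∈ K` of maximal norm, Cauchy–Schwarz
puts every `y` with `‖y‖ ‖u‖ ≤ 1` into `K* = K`; in particular `-v/‖u‖ ∈ K`, which realizes both
`ρ_K(-v)` and `h_K(-v)`, while `⟪x, u⟫ ≥ -1` bounds them by `1/‖u‖`. In direction `v` itself, `u`
realizes both `ρ_K(v)` and `h_K(v)`, which the maximality of `‖u‖` bounds by `‖u‖`.
-/

section SelfDual

variable {n : ℕ} {K : Set (Eu n)}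

theorem neg_one_le_inner_of_dualSet_eq (hsd : dualSet K = K) {x y : Eu n} (hx : x ∈ K)
    (hy : y ∈ K) : -1 ≤ ⟪x, y⟫ := by
  rw [← hsd] at hx
  linarith [hx y hy]

theorem mem_of_norm_mul_le_one_of_dualSet_eq (hsd : dualSet K = K) {u : Eu n}
    (hmax : ∀ x ∈ K, ‖x‖ ≤ ‖u‖) {y : Eu n} (hy : ‖y‖ * ‖u‖ ≤ 1) : y ∈ K := by
  rw [← hsd]
  intro x hx
  have hyx : ‖y‖ * ‖x‖ ≤ 1 :=
    (mul_le_mul_of_nonneg_left (hmax x hx) (norm_nonneg y)).trans hy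
  linarith [neg_le_of_abs_le (abs_real_inner_le_norm y x)]

theorem ne_zero_of_dualSet_eq [Nontrivial (Eu n)] (hsd : dualSet K = K) {u : Eu n}
    (hmax : ∀ x ∈ K, ‖x‖ ≤ ‖u‖) : u ≠ 0 := by
  rintro rfl
  obtain ⟨y, hy⟩ := exists_ne (0 : Eu n)
  have hyK : y ∈ K := mem_of_norm_mul_le_one_of_dualSet_eq hsd hmax (by simp)
  exact hy (norm_le_zero_iff.mp (by simpa using hmax y hyK))

end SelfDual

section MaxNormPoint

variable {n : ℕ} {K : Set (Eu n)} {u : Eu n}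

theorem radial_inv_norm_smul_eq_norm (hu : u ∈ K) (hmax : ∀ x ∈ K, ‖x‖ ≤ ‖u‖) (hu0 : u ≠ 0) :
    radial K (‖u‖⁻¹ • u) = ‖u‖ := by
  have hv : ‖‖u‖⁻¹ • u‖ = 1 := norm_smul_inv_norm hu0
  refine IsGreatest.csSup_eq ⟨⟨norm_nonneg u, ?_⟩, ?_⟩
  · rwa [smul_smul, mul_inv_cancel₀ (norm_ne_zero_iff.mpr hu0), one_smul]
  · rintro l ⟨hl, hlK⟩
    simpa [norm_smul, hv, abs_of_nonneg hl] using hmax _ hlK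

theorem supp_inv_norm_smul_eq_norm (hu : u ∈ K) (hmax : ∀ x ∈ K, ‖x‖ ≤ ‖u‖) (hu0 : u ≠ 0) :
    supp K (‖u‖⁻¹ • u) = ‖u‖ := by
  have hv : ‖‖u‖⁻¹ • u‖ = 1 := norm_smul_inv_norm hu0
  refine IsGreatest.csSup_eq ⟨⟨u, hu, ?_⟩, ?_⟩
  · show ⟪u, ‖u‖⁻¹ • u⟫ = ‖u‖
    rw [real_inner_smul_right, real_inner_self_eq_norm_sq]
    field_simp
  · rintro _ ⟨x, hx, rfl⟩
    calc ⟪x, ‖u‖⁻¹ • u⟫ ≤ ‖x‖ * ‖‖u‖⁻¹ • u‖ := real_inner_le_norm _ _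
      _ ≤ ‖u‖ := by rw [hv, mul_one]; exact hmax x hx

theorem inv_norm_smul_neg_mem (hsd : dualSet K = K) (hmax : ∀ x ∈ K, ‖x‖ ≤ ‖u‖) (hu0 : u ≠ 0) :
    ‖u‖⁻¹ • -(‖u‖⁻¹ • u) ∈ K := by
  have hv : ‖‖u‖⁻¹ • u‖ = 1 := norm_smul_inv_norm hu0
  refine mem_of_norm_mul_le_one_of_dualSet_eq hsd hmax (le_of_eq ?_)
  rw [norm_smul, norm_neg, hv, norm_inv, norm_norm, mul_one,
    inv_mul_cancel₀ (norm_ne_zero_iff.mpr hu0)]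

theorem radial_neg_inv_norm_smul_eq_inv_norm (hsd : dualSet K = K) (hu : u ∈ K)
    (hmax : ∀ x ∈ K, ‖x‖ ≤ ‖u‖) (hu0 : u ≠ 0) :
    radial K (-(‖u‖⁻¹ • u)) = ‖u‖⁻¹ := by
  have hpos : 0 < ‖u‖ := norm_pos_iff.mpr hu0
  refine IsGreatest.csSup_eq ⟨⟨by positivity, inv_norm_smul_neg_mem hsd hmax hu0⟩, ?_⟩
  rintro l ⟨-, hlK⟩
  have h := neg_one_le_inner_of_dualSet_eq hsd hlK hu
  have hlu : ⟪l • -(‖u‖⁻¹ • u), u⟫ = -(l * ‖u‖) := by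
    rw [real_inner_smul_left, inner_neg_left, real_inner_smul_left, real_inner_self_eq_norm_sq]
    field_simp
  rw [hlu] at h
  rw [← one_div, le_div_iff₀ hpos]
  linarith

theorem supp_neg_inv_norm_smul_eq_inv_norm (hsd : dualSet K = K) (hu : u ∈ K)
    (hmax : ∀ x ∈ K, ‖x‖ ≤ ‖u‖) (hu0 : u ≠ 0) :
    supp K (-(‖u‖⁻¹ • u)) = ‖u‖⁻¹ := by
  have hpos : 0 < ‖u‖ := norm_pos_iff.mpr hu0
  refine IsGreatest.csSup_eq ⟨⟨_, inv_norm_smul_neg_mem hsd hmax hu0, ?_⟩, ?_⟩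
  · have hv : ‖‖u‖⁻¹ • u‖ = 1 := norm_smul_inv_norm hu0
    show ⟪‖u‖⁻¹ • -(‖u‖⁻¹ • u), -(‖u‖⁻¹ • u)⟫ = ‖u‖⁻¹
    rw [real_inner_smul_left, inner_neg_neg, real_inner_self_eq_norm_sq, hv, one_pow, mul_one]
  · rintro _ ⟨x, hx, rfl⟩
    have h := neg_one_le_inner_of_dualSet_eq hsd hx hu
    show ⟪x, -(‖u‖⁻¹ • u)⟫ ≤ ‖u‖⁻¹
    rw [inner_neg_right, real_inner_smul_right]
    nlinarith [inv_pos.mpr hpos]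

end MaxNormPoint

theorem stmt9_general (K : Set (Eu 2))
    (hsd : dualSet K = K) (u : Eu 2) (hu : u ∈ K) (hmax : ∀ x ∈ K, ‖x‖ ≤ ‖u‖) :
    radial K (‖u‖⁻¹ • u) = supp K (‖u‖⁻¹ • u) ∧
    radial K (-(‖u‖⁻¹ • u)) = supp K (-(‖u‖⁻¹ • u)) ∧
    supp K (-(‖u‖⁻¹ • u)) = (radial K (‖u‖⁻¹ • u))⁻¹ := by
  have hu0 : u ≠ 0 := ne_zero_of_dualSet_eq hsd hmax
  rw [radial_inv_norm_smul_eq_norm hu hmax hu0, supp_inv_norm_smul_eq_norm hu hmax hu0,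
    radial_neg_inv_norm_smul_eq_inv_norm hsd hu hmax hu0,
    supp_neg_inv_norm_smul_eq_inv_norm hsd hu hmax hu0]
  exact ⟨rfl, rfl, rfl⟩

/-- in a planar self-dual convex body, a direction `v` of maximal norm
satisfies `ρ_K(v) = h_K(v)` and `ρ_K(-v) = h_K(-v) = 1/ρ_K(v)`. -/
theorem stmt9 (K : Set (Eu 2)) (hK : IsCompact K) (hconv : Convex ℝ K)
    (hsd : dualSet K = K) (u : Eu 2) (hu : u ∈ K) (hmax : ∀ x ∈ K, ‖x‖ ≤ ‖u‖) :
    radial K (‖u‖⁻¹ • u) = supp K (‖u‖⁻¹ • u) ∧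
    radial K (-(‖u‖⁻¹ • u)) = supp K (-(‖u‖⁻¹ • u)) ∧
    supp K (-(‖u‖⁻¹ • u)) = (radial K (‖u‖⁻¹ • u))⁻¹ :=
  stmt9_general K hsd u hu hmax
end
end

section
/- Let C ⊆ ℝ^n be a convex set and let F be a nonempty face of C. Then the normal cones satisfy ⋂_{x∈F} N(x) = N(y) for any y in the relative interior of F; in particular the intersection ⋂_{x∈F} N(x) is itself a normal cone of C. -/
open RealInnerProductSpace Set
open scoped ENNReal

noncomputable section

/-! If `y` lies in the relative interior of `F` and `x ∈ F`, the ray from `x` through `y` stays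
in `F ⊆ C` a little beyond `y`. A vector `u` normal to `C` at `y` is then nonpositive on `y - x`,
so `⟪u, z - x⟫ = ⟪u, z - y⟫ + ⟪u, y - x⟫ ≤ 0` for all `z ∈ C`: `u` is normal at `x` as well. -/

open Topology

theorem exists_lineMap_mem_of_mem_intrinsicInterior {V : Type*} [AddCommGroup V] [Module ℝ V]
    [TopologicalSpace V] [IsTopologicalAddGroup V] [ContinuousSMul ℝ V] {s : Set V} {x y : V}
    (hx : x ∈ s) (hy : y ∈ intrinsicInterior ℝ s) :
    ∃ t : ℝ, 1 < t ∧ AffineMap.lineMap x y t ∈ s := by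
  obtain ⟨⟨y, hyA⟩, hint, rfl⟩ := mem_intrinsicInterior.mp hy
  let f : ℝ → affineSpan ℝ s := fun t =>
    ⟨AffineMap.lineMap x y t, AffineMap.lineMap_mem t (subset_affineSpan ℝ s hx) hyA⟩
  have hf : Continuous f := AffineMap.lineMap_continuous.subtype_mk _
  have hnear : ∀ᶠ t in 𝓝[>] 1, f t ∈ interior ((↑) ⁻¹' s : Set (affineSpan ℝ s)) :=
    hf.continuousWithinAt.eventually_mem (by simpa [f] using isOpen_interior.mem_nhds hint)
  obtain ⟨t, ht, ht1⟩ := (hnear.and self_mem_nhdsWithin).exists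
  exact ⟨t, ht1, interior_subset (s := ((↑) ⁻¹' s : Set (affineSpan ℝ s))) ht⟩

theorem normalCone_subset_of_lineMap_mem {n : ℕ} {C : Set (Eu n)} {x y : Eu n} {t : ℝ}
    (ht : 1 < t) (hmem : AffineMap.lineMap x y t ∈ C) : normalCone C y ⊆ normalCone C x := by
  intro u hu z hz
  have hyx : ⟪u, y - x⟫ ≤ 0 := by
    have hstep : AffineMap.lineMap x y t - y = (t - 1) • (y - x) := by
      rw [AffineMap.lineMap_apply, vsub_eq_sub, vadd_eq_add, sub_smul, one_smul]
      abel
    have h := hu _ hmem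
    rw [hstep, real_inner_smul_right] at h
    exact nonpos_of_mul_nonpos_right h (sub_pos.mpr ht)
  calc ⟪u, z - x⟫ = ⟪u, z - y⟫ + ⟪u, y - x⟫ := by rw [← inner_add_right, sub_add_sub_cancel]
    _ ≤ 0 := add_nonpos (hu z hz) hyx

theorem normalCone_subset_of_mem_intrinsicInterior {n : ℕ} {C F : Set (Eu n)} {x y : Eu n}
    (hFC : F ⊆ C) (hx : x ∈ F) (hy : y ∈ intrinsicInterior ℝ F) :
    normalCone C y ⊆ normalCone C x :=
  let ⟨_, ht, hmem⟩ := exists_lineMap_mem_of_mem_intrinsicInterior hx hy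
  normalCone_subset_of_lineMap_mem ht (hFC hmem)

theorem stmt10_general {n : ℕ} (C F : Set (Eu n)) (hF : IsFace C F)
    (y : Eu n) (hy : y ∈ intrinsicInterior ℝ F) :
    (⋂ x ∈ F, normalCone C x) = normalCone C y :=
  (iInter₂_subset y (intrinsicInterior_subset hy)).antisymm
    (subset_iInter₂ fun _ hx => normalCone_subset_of_mem_intrinsicInterior hF.1 hx hy)

/-- the intersection of the normal cones over a nonempty face equals the
normal cone at any relative interior point of the face. -/
theorem stmt10 {n : ℕ} (C F : Set (Eu n)) (hC : Convex ℝ C) (hF : IsFace C F)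
    (hne : F.Nonempty) (y : Eu n) (hy : y ∈ intrinsicInterior ℝ F) :
    (⋂ x ∈ F, normalCone C x) = normalCone C y :=
  stmt10_general C F hF y hy
end
end

section
/- Let K ⊆ ℝ^n be a convex body with 0 ∈ int(K) and let F be a nonempty face of K with y ∈ ri(F). Then the normal cone N(y) equals the positive hull of the conjugate face: N(y) = pos(C_K(F)), where C_K(F) = {v ∈ K° | ⟨v,u⟩ = 1 ∀ u ∈ F}. -/
open RealInnerProductSpace Set
open scoped ENNReal

noncomputable section

/-!
A nonzero normal vector `u` of `K` at `y` is a linear functional maximised over `K` at `y`.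
Since `0` is an interior point of `K`, the maximum `⟪u, y⟫` is positive, so `⟪u, y⟫⁻¹ • u`
lies in the polar body and takes the value `1` at `y`. A linear functional that attains its
maximum over `F` at a relative interior point is constant on `F`, because every segment of `F`
ending at `y` can be prolonged beyond `y` inside `F`; hence `⟪u, y⟫⁻¹ • u` lies in the conjugate
face. Conversely, elements of the conjugate face are normal at `y ∈ F`, and the normal cone is
closed under nonnegative scaling.
-/

open Filter Topology

section IntrinsicInterior

variable {E : Type*} [AddCommGroup E] [Module ℝ E] [TopologicalSpace E]
  [IsTopologicalAddGroup E] [ContinuousSMul ℝ E] {F : Set E} {u y : E}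

theorem exists_mem_openSegment_of_mem_intrinsicInterior (hy : y ∈ intrinsicInterior ℝ F)
    (hu : u ∈ F) : ∃ z ∈ F, y ∈ openSegment ℝ u z := by
  obtain ⟨y', hy', rfl⟩ := hy
  let γ : ℝ → affineSpan ℝ F := fun t =>
    ⟨u + t • ((y' : E) - u), by
      simpa [vsub_eq_sub, vadd_eq_add, add_comm] using
        (affineSpan ℝ F).smul_vsub_vadd_mem t y'.2 (subset_affineSpan ℝ F hu)
          (subset_affineSpan ℝ F hu)⟩
  have hγ : Continuous γ := by
    apply Continuous.subtype_mk
    fun_prop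
  have hγ1 : γ 1 = y' := by ext1; simp [γ]
  have hopen : IsOpen (γ ⁻¹' interior ((↑) ⁻¹' F)) := isOpen_interior.preimage hγ
  have h1 : (1 : ℝ) ∈ γ ⁻¹' interior ((↑) ⁻¹' F) := by rw [mem_preimage, hγ1]; exact hy'
  have hnear : ∀ᶠ t in 𝓝[>] (1 : ℝ), γ t ∈ interior ((↑) ⁻¹' F) :=
    nhdsWithin_le_nhds (hopen.mem_nhds h1)
  obtain ⟨t, htF, ht1⟩ := (hnear.and self_mem_nhdsWithin).exists
  have ht0 : 0 < t := zero_lt_one.trans ht1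
  refine ⟨γ t, (interior_subset htF : γ t ∈ (↑) ⁻¹' F), 1 - t⁻¹, t⁻¹,
    sub_pos.2 (inv_lt_one_of_one_lt₀ ht1), inv_pos.2 ht0, by ring, ?_⟩
  match_scalars
  · field_simp
    ring
  · field_simp

theorem IsMaxOn.apply_eq_of_mem_intrinsicInterior (f : E →ₗ[ℝ] ℝ) (hmax : IsMaxOn f F y)
    (hy : y ∈ intrinsicInterior ℝ F) (hu : u ∈ F) : f u = f y := by
  obtain ⟨z, hz, a, b, ha, hb, hab, rfl⟩ := exists_mem_openSegment_of_mem_intrinsicInterior hy hu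
  have hfu : f u ≤ f (a • u + b • z) := hmax hu
  have hfz : f z ≤ f (a • u + b • z) := hmax hz
  simp only [map_add, map_smul, smul_eq_mul] at hfu hfz ⊢
  obtain rfl : a = 1 - b := by linarith
  nlinarith

end IntrinsicInterior

section NormalCone

variable {n : ℕ} {C F : Set (Eu n)} {u x y : Eu n}

theorem mem_normalCone_iff : u ∈ normalCone C x ↔ IsMaxOn (⟪u, ·⟫) C x := by
  refine forall₂_congr fun z _ => ?_
  rw [inner_sub_right, sub_nonpos]
  rfl

theorem inner_pos_of_mem_normalCone (h0 : (0 : Eu n) ∈ interior C) (hu : u ∈ normalCone C x)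
    (hu0 : u ≠ 0) : 0 < ⟪u, x⟫ := by
  have hsmul : ∀ᶠ t in 𝓝[>] (0 : ℝ), t • u ∈ C := by
    refine nhdsWithin_le_nhds (((continuous_id.smul continuous_const).tendsto' 0 0 ?_) ?_)
    · simp
    · exact mem_interior_iff_mem_nhds.mp h0
  obtain ⟨t, htC, ht⟩ := (hsmul.and self_mem_nhdsWithin).exists
  calc 0 < t * ‖u‖ ^ 2 := by have := norm_pos_iff.2 hu0; positivity
    _ = ⟪u, t • u⟫ := by rw [real_inner_smul_right, real_inner_self_eq_norm_sq]
    _ ≤ ⟪u, x⟫ := mem_normalCone_iff.1 hu htC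

theorem inv_inner_smul_mem_conjFace (hFC : F ⊆ C) (hy : y ∈ intrinsicInterior ℝ F)
    (hu : u ∈ normalCone C y) (hpos : 0 < ⟪u, y⟫) : ⟪u, y⟫⁻¹ • u ∈ conjFace C F := by
  have hmax := mem_normalCone_iff.1 hu
  refine ⟨fun z hz => ?_, fun z hz => ?_⟩
  · rw [real_inner_smul_left, inv_mul_le_iff₀ hpos, mul_one]
    exact hmax hz
  · rw [real_inner_smul_left, inv_mul_eq_one₀ hpos.ne']
    exact ((hmax.on_subset hFC).apply_eq_of_mem_intrinsicInterior (innerₛₗ ℝ u) hy hz).symm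

theorem normalCone_subset_posHull (h0 : (0 : Eu n) ∈ interior C) (hFC : F ⊆ C)
    (hy : y ∈ intrinsicInterior ℝ F) : normalCone C y ⊆ posHull (conjFace C F) := by
  intro u hu
  by_cases hu0 : u = 0
  · exact Or.inl hu0
  have hpos := inner_pos_of_mem_normalCone h0 hu hu0
  refine Or.inr ⟨⟪u, y⟫, hpos.le, _, inv_inner_smul_mem_conjFace hFC hy hu hpos, ?_⟩
  rw [smul_smul, mul_inv_cancel₀ hpos.ne', one_smul]

theorem conjFace_subset_normalCone (hy : y ∈ F) : conjFace C F ⊆ normalCone C y := by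
  intro v ⟨hvC, hvF⟩ z hz
  rw [inner_sub_right, hvF y hy, sub_nonpos]
  exact hvC z hz

theorem zero_mem_normalCone : (0 : Eu n) ∈ normalCone C x := fun z _ => by simp

theorem smul_mem_normalCone {l : ℝ} (hl : 0 ≤ l) (hu : u ∈ normalCone C x) :
    l • u ∈ normalCone C x := fun z hz => by
  rw [real_inner_smul_left]
  exact mul_nonpos_of_nonneg_of_nonpos hl (hu z hz)

theorem posHull_subset_normalCone (hy : y ∈ F) : posHull (conjFace C F) ⊆ normalCone C y := by
  rintro _ (rfl | ⟨l, hl, v, hv, rfl⟩)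
  · exact zero_mem_normalCone
  · exact smul_mem_normalCone hl (conjFace_subset_normalCone hy hv)

end NormalCone

theorem stmt12_general {n : ℕ} (K F : Set (Eu n))
    (h0 : (0 : Eu n) ∈ interior K) (hF : IsFace K F)
    (y : Eu n) (hy : y ∈ intrinsicInterior ℝ F) :
    normalCone K y = posHull (conjFace K F) :=
  (normalCone_subset_posHull h0 hF.1 hy).antisymm
    (posHull_subset_normalCone (intrinsicInterior_subset hy))

/-- the normal cone of a nonempty face equals the positive hull of its
conjugate face. -/
theorem stmt12 {n : ℕ} (K F : Set (Eu n)) (hK : IsCompact K) (hconv : Convex ℝ K)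
    (h0 : (0 : Eu n) ∈ interior K) (hF : IsFace K F) (hne : F.Nonempty)
    (y : Eu n) (hy : y ∈ intrinsicInterior ℝ F) :
    normalCone K y = posHull (conjFace K F) :=
  stmt12_general K F h0 hF y hy
end
end

section
/- Let K ⊆ ℝ^n be a convex body with 0 ∈ int(K). For every face F of K, the double conjugate C_{K°}(C_K(F)) equals the exposed closure of F, i.e. the intersection of all exposed faces of K containing F. -/
open RealInnerProductSpace Set
open scoped ENNReal

noncomputable section

/-!
Since `K` is closed, convex and contains `0`, the bipolar theorem makes `C_{K°}(G)` the set of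
`x ∈ K` with `⟪x, v⟫ = 1` for all `v ∈ G`. For nonempty `F`, every `v ∈ C_K(F)` satisfies
`h_K(v) = 1`, so it exposes the face `K ∩ H_K(v) ⊇ F`; conversely an exposed face `K ∩ H_K(u) ⊇ F`
with `u ≠ 0` yields `u / h_K(u) ∈ C_K(F)`, where `h_K(u) > 0` because `0 ∈ int K`.
So both sides are cut out of `K` by the same hyperplanes.
-/

section ConjugateFace

variable {n : ℕ} {K : Set (Eu n)}

lemma inner_le_supp (hK : IsCompact K) {y : Eu n} (hy : y ∈ K) (u : Eu n) :
    ⟪y, u⟫ ≤ supp K u :=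
  le_csSup (hK.image (continuous_id.inner continuous_const)).bddAbove ⟨y, hy, rfl⟩

lemma supp_le (hne : K.Nonempty) {u : Eu n} {c : ℝ} (h : ∀ y ∈ K, ⟪y, u⟫ ≤ c) :
    supp K u ≤ c :=
  csSup_le (hne.image _) (by rintro _ ⟨y, hy, rfl⟩; exact h y hy)

lemma supp_pos (hK : IsCompact K) (h0 : (0 : Eu n) ∈ interior K) {u : Eu n} (hu : u ≠ 0) :
    0 < supp K u := by
  have hsmul : ∀ᶠ t : ℝ in nhdsWithin 0 (Ioi 0), t • u ∈ K :=
    ((continuous_id.smul continuous_const).tendsto' (0 : ℝ) (0 : Eu n) (zero_smul ℝ u)).eventually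
      (mem_interior_iff_mem_nhds.1 h0) |>.filter_mono nhdsWithin_le_nhds
  obtain ⟨t, htK, ht⟩ := (hsmul.and self_mem_nhdsWithin).exists
  calc (0 : ℝ) < t * ‖u‖ ^ 2 := mul_pos ht (by positivity)
    _ = ⟪t • u, u⟫ := by rw [real_inner_smul_left, real_inner_self_eq_norm_sq]
    _ ≤ supp K u := inner_le_supp hK htK u

lemma subset_polarSet_polarSet (K : Set (Eu n)) : K ⊆ polarSet (polarSet K) :=
  fun x hx v hv => real_inner_comm x v ▸ hv x hx

lemma polarSet_polarSet (hcl : IsClosed K) (hconv : Convex ℝ K) (h0 : (0 : Eu n) ∈ K) :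
    polarSet (polarSet K) = K := by
  refine Subset.antisymm ?_ (subset_polarSet_polarSet K)
  intro x hx
  by_contra hxK
  obtain ⟨f, c, hfK, hcx⟩ := geometric_hahn_banach_closed_point hconv hcl hxK
  set v := (InnerProductSpace.toDual ℝ (Eu n)).symm f
  have hfv : ∀ z, f z = ⟪v, z⟫ := fun z => InnerProductSpace.toDual_symm_apply.symm
  have hc : 0 < c := by simpa using hfK 0 h0
  have hvK : c⁻¹ • v ∈ polarSet K := fun y hy => by
    rw [real_inner_smul_left, inv_mul_le_iff₀ hc, mul_one, ← hfv]
    exact (hfK y hy).le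
  have hxv := hx _ hvK
  rw [real_inner_smul_right, real_inner_comm, inv_mul_le_iff₀ hc, mul_one, ← hfv] at hxv
  exact hxv.not_gt hcx

lemma conjFace_polarSet (hcl : IsClosed K) (hconv : Convex ℝ K) (h0 : (0 : Eu n) ∈ K)
    (G : Set (Eu n)) : conjFace (polarSet K) G = {x ∈ K | ∀ v ∈ G, ⟪x, v⟫ = 1} := by
  rw [conjFace, polarSet_polarSet hcl hconv h0]

lemma inv_supp_smul_mem_conjFace (hK : IsCompact K) (h0 : (0 : Eu n) ∈ interior K)
    {u : Eu n} (hu : u ≠ 0) {F : Set (Eu n)} (hF : F ⊆ {x ∈ K | ⟪x, u⟫ = supp K u}) :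
    (supp K u)⁻¹ • u ∈ conjFace K F := by
  have hpos := supp_pos hK h0 hu
  refine ⟨fun y hy => ?_, fun w hw => ?_⟩
  · rw [real_inner_smul_left, real_inner_comm, inv_mul_le_iff₀ hpos, mul_one]
    exact inner_le_supp hK hy u
  · rw [real_inner_smul_left, real_inner_comm, (hF hw).2, inv_mul_cancel₀ hpos.ne']

lemma supp_eq_one_of_mem_conjFace (hK : IsCompact K) {F : Set (Eu n)} (hFK : F ⊆ K)
    (hF : F.Nonempty) {v : Eu n} (hv : v ∈ conjFace K F) : supp K v = 1 := by
  obtain ⟨u₀, hu₀⟩ := hF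
  refine le_antisymm (supp_le ⟨u₀, hFK hu₀⟩ fun y hy => ?_) ?_
  · rw [real_inner_comm]
    exact hv.1 y hy
  · rw [← hv.2 u₀ hu₀, real_inner_comm]
    exact inner_le_supp hK (hFK hu₀) v

lemma conjFace_conjFace_empty (K : Set (Eu n)) : conjFace (polarSet K) (conjFace K ∅) = ∅ := by
  refine eq_empty_of_forall_notMem fun x hx => ?_
  have h0 : (0 : Eu n) ∈ conjFace K ∅ := ⟨fun y _ => by simp, by simp⟩
  simpa using hx.2 0 h0

end ConjugateFace

/-- the double conjugate of a face equals its exposed closure, the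
intersection of all exposed faces containing it. -/
theorem stmt14 {n : ℕ} (K : Set (Eu n)) (hK : IsCompact K) (hconv : Convex ℝ K)
    (h0 : (0 : Eu n) ∈ interior K) (F : Set (Eu n)) (hF : IsFace K F) :
    conjFace (polarSet K) (conjFace K F) = ⋂₀ {G | IsExposedFace K G ∧ F ⊆ G} := by
  rcases F.eq_empty_or_nonempty with rfl | hFne
  · rw [conjFace_conjFace_empty, eq_comm, ← subset_empty_iff]
    exact sInter_subset_of_mem ⟨Or.inl rfl, empty_subset _⟩
  rw [conjFace_polarSet hK.isClosed hconv (interior_subset h0)]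
  ext x
  refine ⟨fun ⟨hxK, hx⟩ G ⟨hG, hFG⟩ => ?_, fun hx => ⟨hx K ⟨Or.inr (Or.inl rfl), hF.1⟩, ?_⟩⟩
  · rcases hG with rfl | rfl | ⟨u, hu, rfl⟩
    · exact absurd (hFG hFne.some_mem) (notMem_empty _)
    · exact hxK
    · have hxu := hx _ (inv_supp_smul_mem_conjFace hK h0 hu hFG)
      rw [real_inner_smul_right, inv_mul_eq_one₀ (supp_pos hK h0 hu).ne'] at hxu
      exact ⟨hxK, hxu.symm⟩
  · intro v hv
    have hsupp := supp_eq_one_of_mem_conjFace hK hF.1 hFne hv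
    have hv0 : v ≠ 0 := by
      rintro rfl
      simpa using hv.2 _ hFne.some_mem
    have hFv : F ⊆ {y ∈ K | ⟪y, v⟫ = supp K v} := fun w hw =>
      ⟨hF.1 hw, by rw [hsupp, real_inner_comm]; exact hv.2 w hw⟩
    obtain ⟨-, hxv⟩ := hx _ ⟨Or.inr (Or.inr ⟨v, hv0, rfl⟩), hFv⟩
    rw [hxv, hsupp]
end
end

section
/- Let K ⊆ ℝ² be a convex body. Every non-exposed point x of K is a smooth extreme point (its normal cone is a ray, dim N(x) = 1) and is incident with exactly one segment (one-dimensional face) of K. Conversely, every smooth extreme point incident with a unique segment of K is a non-exposed point. -/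
open RealInnerProductSpace Set
open scoped ENNReal

noncomputable section

/-!
A nonzero normal vector `w` at `x` cuts out the face `K ∩ {y | ⟪y, w⟫ = ⟪x, w⟫}`, and in the
plane every segment through `x` arises this way: it spans a line, and since `K` meets that line in
a face, `K` lies on one side of it. A non-exposed extreme point is a boundary point, so it has a
nonzero normal `u`; a normal `w ∉ ℝ ∙ u` would give the exposing vector `u + w`, because no
nonzero vector of the plane is orthogonal to both. Hence `N(x)` spans `ℝ ∙ u`, and the face cut
out by `u` is the only segment through `x`. Conversely, if `N(x)` spans a line, every segment
through `x` is cut out by a multiple of a vector exposing `x`, so it would be `{x}`.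
-/

open Module Submodule

instance fact_finrank_eu_two : Fact (finrank ℝ (Eu 2) = 2) := ⟨finrank_euclideanSpace_fin⟩

/-- For `w ∈ normalCone K x` this is the face `K ∩ H_K(w)`. Using `⟪x, w⟫` rather than
`supp K w` makes it depend only on the line `ℝ ∙ w`, not on the sign of `w`. -/
def supportSet {n : ℕ} (K : Set (Eu n)) (x w : Eu n) : Set (Eu n) :=
  {y ∈ K | ⟪y, w⟫ = ⟪x, w⟫}

section General

variable {n : ℕ} {K s : Set (Eu n)} {x a b u w : Eu n}

lemma mem_normalCone_iff_inner_le :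
    w ∈ normalCone K x ↔ ∀ y ∈ K, ⟪y, w⟫ ≤ ⟪x, w⟫ := by
  refine forall₂_congr fun y _ => ?_
  rw [inner_sub_right, sub_nonpos, real_inner_comm y, real_inner_comm x]

lemma mem_normalCone_iff_supp_eq (hK : IsCompact K) (hx : x ∈ K) :
    w ∈ normalCone K x ↔ supp K w = ⟪x, w⟫ := by
  have hbdd : BddAbove ((fun y => ⟪y, w⟫) '' K) :=
    hK.bddAbove_image (continuous_id.inner continuous_const).continuousOn
  rw [mem_normalCone_iff_inner_le]
  refine ⟨fun h => le_antisymm ?_ (le_csSup hbdd ⟨x, hx, rfl⟩), fun h y hy => ?_⟩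
  · exact csSup_le ⟨_, x, hx, rfl⟩ (forall_mem_image.2 h)
  · exact h ▸ le_csSup hbdd ⟨y, hy, rfl⟩

lemma supportSet_smul {c : ℝ} (hc : c ≠ 0) : supportSet K x (c • w) = supportSet K x w := by
  ext y
  simp only [supportSet, mem_sep_iff, real_inner_smul_right, mul_right_inj' hc]

lemma supportSet_eq_of_mem_span (hw : w ≠ 0) (hwu : w ∈ ℝ ∙ u) :
    supportSet K x w = supportSet K x u := by
  obtain ⟨c, rfl⟩ := mem_span_singleton.1 hwu
  exact supportSet_smul (left_ne_zero_of_smul hw)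

lemma isExposedFace_singleton_iff [NeZero n] (hK : IsCompact K) (hx : x ∈ K) :
    IsExposedFace K {x} ↔ ∃ w ≠ 0, w ∈ normalCone K x ∧ supportSet K x w = {x} := by
  constructor
  · rintro (h | h | ⟨w, hw0, hw⟩)
    · exact absurd h (singleton_ne_empty x)
    · obtain ⟨w, hw0⟩ := exists_ne (0 : Eu n)
      refine ⟨w, hw0, ?_, ?_⟩
      · rw [mem_normalCone_iff_inner_le, ← h]
        rintro y rfl
        rfl
      · rw [h]
        exact sep_eq_self_iff_mem_true.2 fun y hy => by rw [← h] at hy; rw [hy]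
    · have hsupp : supp K w = ⟪x, w⟫ := by
        have hxw : x ∈ {y ∈ K | ⟪y, w⟫ = supp K w} := hw ▸ rfl
        exact hxw.2.symm
      exact ⟨w, hw0, (mem_normalCone_iff_supp_eq hK hx).2 hsupp, by rw [hw, hsupp]; rfl⟩
  · rintro ⟨w, hw0, hw, hwx⟩
    refine Or.inr (Or.inr ⟨w, hw0, ?_⟩)
    rw [(mem_normalCone_iff_supp_eq hK hx).1 hw, ← hwx]
    rfl

lemma isFace_supportSet (hK : Convex ℝ K) (hw : w ∈ normalCone K x) :
    IsFace K (supportSet K x w) := by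
  rw [mem_normalCone_iff_inner_le] at hw
  refine ⟨sep_subset _ _, ?_, ?_⟩
  · rintro p ⟨hpK, hp⟩ q ⟨hqK, hq⟩ α β hα hβ hαβ
    refine ⟨hK hpK hqK hα hβ hαβ, ?_⟩
    rw [inner_add_left, real_inner_smul_left, real_inner_smul_left, hp, hq, ← add_mul, hαβ,
      one_mul]
  · rintro p hpK q hqK y ⟨-, hy⟩ ⟨α, β, hα, hβ, hαβ, rfl⟩
    rw [inner_add_left, real_inner_smul_left, real_inner_smul_left] at hy
    have hsum : α * (⟪x, w⟫ - ⟪p, w⟫) + β * (⟪x, w⟫ - ⟪q, w⟫) = 0 := by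
      linear_combination ⟪x, w⟫ * hαβ - hy
    obtain ⟨hp, hq⟩ := (add_eq_zero_iff_of_nonneg (mul_nonneg hα.le (sub_nonneg.2 (hw p hpK)))
      (mul_nonneg hβ.le (sub_nonneg.2 (hw q hqK)))).1 hsum
    exact ⟨⟨hpK, (sub_eq_zero.1 ((mul_eq_zero.1 hp).resolve_left hα.ne')).symm⟩,
      ⟨hqK, (sub_eq_zero.1 ((mul_eq_zero.1 hq).resolve_left hβ.ne')).symm⟩⟩

lemma IsFace.lineMap_mem (hs : IsFace K s) (ha : a ∈ s) (hb : b ∈ s) {t : ℝ}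
    (ht : AffineMap.lineMap a b t ∈ K) : AffineMap.lineMap a b t ∈ s := by
  rcases lt_or_ge t 0 with ht0 | ht0
  · have hmem : a ∈ openSegment ℝ (AffineMap.lineMap a b t) b := by
      have h1t : 0 < 1 - t := by linarith
      convert lineMap_mem_openSegment ℝ (AffineMap.lineMap a b t) b
        (t := -t / (1 - t)) ⟨div_pos (by linarith) h1t, (div_lt_one h1t).2 (by linarith)⟩
      rw [AffineMap.lineMap_lineMap_left]
      field_simp
      simp
    exact (hs.2.2 _ ht b (hs.1 hb) a ha hmem).1
  rcases le_or_gt t 1 with ht1 | ht1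
  · exact hs.2.1.segment_subset ha hb (lineMap_mem_segment ℝ a b ⟨ht0, ht1⟩)
  · have hmem : b ∈ openSegment ℝ a (AffineMap.lineMap a b t) := by
      convert lineMap_mem_openSegment ℝ a (AffineMap.lineMap a b t)
        (t := t⁻¹) ⟨by positivity, inv_lt_one_of_one_lt₀ ht1⟩
      rw [AffineMap.lineMap_lineMap_right, inv_mul_cancel₀ (by positivity),
        AffineMap.lineMap_apply_one]
    exact (hs.2.2 a (hs.1 ha) _ ht b hb hmem).2

lemma mem_normalCone_or_neg_mem (hK : Convex ℝ K) (hs : IsFace K (supportSet K x w)) :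
    w ∈ normalCone K x ∨ -w ∈ normalCone K x := by
  simp only [mem_normalCone_iff_inner_le, inner_neg_right, neg_le_neg_iff]
  by_contra! h
  obtain ⟨⟨p, hpK, hp⟩, ⟨q, hqK, hq⟩⟩ := h
  have hx : ⟪x, w⟫ ∈ (fun y => ⟪y, w⟫) '' openSegment ℝ q p := by
    have himage := image_openSegment ℝ ((innerₛₗ ℝ w).toAffineMap) q p
    simp only [LinearMap.coe_toAffineMap, coe_innerₛₗ_apply, ← real_inner_comm w] at himage
    rw [himage, openSegment_eq_Ioo (hq.trans hp)]
    exact ⟨hq, hp⟩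
  obtain ⟨r, hr, hrw⟩ := hx
  have hpF := (hs.2.2 q hqK p hpK r ⟨hK.openSegment_subset hqK hpK hr, hrw⟩ hr).2
  exact hp.ne' hpF.2

lemma exists_ne_zero_mem_normalCone (hK : Convex ℝ K) (hx : x ∈ K) (hxi : x ∉ interior K) :
    ∃ u ≠ 0, u ∈ normalCone K x := by
  by_cases hint : (interior K).Nonempty
  · obtain ⟨f, hf0, hf⟩ := geometric_hahn_banach_of_nonempty_interior_point hK hxi hint
    refine ⟨(InnerProductSpace.toDual ℝ (Eu n)).symm f, by simpa using hf0, fun y hy => ?_⟩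
    rw [InnerProductSpace.toDual_symm_apply, map_sub, sub_nonpos]
    exact hf y hy
  · have hdir : (affineSpan ℝ K).direction ≠ ⊤ := by
      rw [Ne, AffineSubspace.direction_eq_top_iff_of_nonempty
        ((affineSpan_nonempty ℝ).2 ⟨x, hx⟩),
        ← hK.interior_nonempty_iff_affineSpan_eq_top]
      exact hint
    obtain ⟨u, hu, hu0⟩ := exists_mem_ne_zero_of_ne_bot (mt orthogonal_eq_bot_iff.1 hdir)
    refine ⟨u, hu0, fun y hy => le_of_eq ?_⟩
    rw [direction_affineSpan] at hu
    exact inner_eq_zero_symm.1 (hu _ (vsub_mem_vectorSpan ℝ hy hx))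

end General

section Plane

variable {K s : Set (Eu 2)} {x u v w : Eu 2}

lemma exists_ne_zero_inner_eq_zero (hv : v ≠ 0) : ∃ w ≠ (0 : Eu 2), ⟪v, w⟫ = 0 := by
  have hbot : (ℝ ∙ v)ᗮ ≠ ⊥ := fun h => by
    have hdim := finrank_orthogonal_span_singleton (𝕜 := ℝ) (_i := fact_finrank_eu_two) hv
    rw [h, finrank_bot] at hdim
    exact zero_ne_one hdim
  obtain ⟨w, hw, hw0⟩ := exists_mem_ne_zero_of_ne_bot hbot
  exact ⟨w, hw0, mem_orthogonal_singleton_iff_inner_right.1 hw⟩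

lemma finrank_direction_supportSet_eq_one (hu : u ≠ 0) (hx : x ∈ K)
    (hne : supportSet K x u ≠ {x}) :
    finrank ℝ (affineSpan ℝ (supportSet K x u)).direction = 1 := by
  obtain ⟨b, hb, hbx⟩ : ∃ b ∈ supportSet K x u, b ≠ x := by
    by_contra! h
    exact hne (eq_singleton_iff_unique_mem.2 ⟨⟨hx, rfl⟩, h⟩)
  have hle : (affineSpan ℝ (supportSet K x u)).direction ≤ (ℝ ∙ u)ᗮ := by
    rw [direction_affineSpan, vectorSpan_def, span_le]
    rintro _ ⟨p, hp, q, hq, rfl⟩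
    refine mem_orthogonal_singleton_iff_inner_left.2 ?_
    change ⟪p - q, u⟫ = 0
    rw [inner_sub_left, hp.2, hq.2, sub_self]
  have hge : ℝ ∙ (b - x) ≤ (affineSpan ℝ (supportSet K x u)).direction := by
    rw [span_singleton_le_iff_mem, direction_affineSpan]
    exact vsub_mem_vectorSpan ℝ hb ⟨hx, rfl⟩
  have h1 := Submodule.finrank_mono hle
  have h2 := Submodule.finrank_mono hge
  rw [finrank_orthogonal_span_singleton (_i := fact_finrank_eu_two) hu] at h1
  rw [finrank_span_singleton (sub_ne_zero.2 hbx)] at h2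
  omega

lemma exists_supportSet_eq_of_finrank_eq_one (hs : IsFace K s)
    (hsd : finrank ℝ (affineSpan ℝ s).direction = 1) (hxs : x ∈ s) :
    ∃ w ≠ 0, s = supportSet K x w := by
  obtain ⟨b, hbs, hbx⟩ : ∃ b ∈ s, b ≠ x := by
    have hsub : ¬ s.Subsingleton := fun h => by
      rw [direction_affineSpan, (vectorSpan_eq_bot_iff_subsingleton ℝ).2 h, finrank_bot] at hsd
      exact zero_ne_one hsd
    exact (not_subsingleton_iff.1 hsub).exists_ne x
  have hbx0 : b - x ≠ 0 := sub_ne_zero.2 hbx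
  have hdir : (affineSpan ℝ s).direction = ℝ ∙ (b - x) :=
    eq_span_singleton_of_mem_of_finrank_eq_one hsd
      (direction_affineSpan ℝ s ▸ vsub_mem_vectorSpan ℝ hbs hxs) hbx0
  obtain ⟨w, hw0, hw⟩ := exists_ne_zero_inner_eq_zero hbx0
  refine ⟨w, hw0, Subset.antisymm (fun y hy => ⟨hs.1 hy, ?_⟩) ?_⟩
  · have hyx : y - x ∈ ℝ ∙ (b - x) := hdir ▸ direction_affineSpan ℝ s ▸
      vsub_mem_vectorSpan ℝ hy hxs
    obtain ⟨c, hc⟩ := mem_span_singleton.1 hyx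
    rw [← sub_eq_zero, ← inner_sub_left, ← hc, real_inner_smul_left, hw, mul_zero]
  · rintro y ⟨hyK, hyw⟩
    have hyx : y - x ∈ ℝ ∙ (b - x) :=
      mem_span_singleton_of_inner_eq_zero_of_inner_eq_zero hw0 hbx0
        (by rw [real_inner_comm, inner_sub_left, hyw, sub_self]) (by rw [real_inner_comm, hw])
    obtain ⟨c, hc⟩ := mem_span_singleton.1 hyx
    have hy : y = AffineMap.lineMap x b c := by
      rw [AffineMap.lineMap_apply, vsub_eq_sub, vadd_eq_add, hc, sub_add_cancel]
    rw [hy] at hyK ⊢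
    exact hs.lineMap_mem hxs hbs hyK

lemma exists_mem_normalCone_supportSet_eq (hK : Convex ℝ K) (hs : IsFace K s)
    (hsd : finrank ℝ (affineSpan ℝ s).direction = 1) (hxs : x ∈ s) :
    ∃ w ≠ 0, w ∈ normalCone K x ∧ s = supportSet K x w := by
  obtain ⟨w, hw0, rfl⟩ := exists_supportSet_eq_of_finrank_eq_one hs hsd hxs
  rcases mem_normalCone_or_neg_mem hK hs with hw | hw
  · exact ⟨w, hw0, hw, rfl⟩
  · refine ⟨-w, neg_ne_zero.2 hw0, hw, ?_⟩
    rw [← neg_one_smul ℝ w, supportSet_smul (by norm_num)]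

lemma isExposedFace_singleton_of_notMem_span (hK : IsCompact K) (hx : x ∈ K) (hu0 : u ≠ 0)
    (hu : u ∈ normalCone K x) (hw : w ∈ normalCone K x) (hwu : w ∉ ℝ ∙ u) :
    IsExposedFace K {x} := by
  refine (isExposedFace_singleton_iff hK hx).2 ⟨u + w, ?_, fun y hy => ?_, ?_⟩
  · rintro h
    exact hwu (eq_neg_of_add_eq_zero_right h ▸ neg_mem (mem_span_singleton_self u))
  · rw [inner_add_left]
    exact add_nonpos (hu y hy) (hw y hy)
  · refine eq_singleton_iff_unique_mem.2 ⟨⟨hx, rfl⟩, fun y ⟨hyK, hy⟩ => ?_⟩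
    have hsum : ⟪u, y - x⟫ + ⟪w, y - x⟫ = 0 := by
      rw [← inner_add_left, inner_sub_right, real_inner_comm y, real_inner_comm x, hy, sub_self]
    have huy : ⟪u, y - x⟫ = 0 := by linarith [hu y hyK, hw y hyK]
    have hwy : ⟪w, y - x⟫ = 0 := by linarith [hu y hyK, hw y hyK]
    by_contra hyx
    exact hwu (mem_span_singleton_of_inner_eq_zero_of_inner_eq_zero (sub_ne_zero.2 hyx) hu0
      (by rw [real_inner_comm, hwy]) (by rw [real_inner_comm, huy]))

end Plane

/-- an extreme point of a planar convex body is non-exposed if and only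
if it is smooth (its normal cone is one-dimensional) and incident with exactly one
segment (one-dimensional face) of `K`. -/
theorem stmt17 (K : Set (Eu 2)) (hK : IsCompact K) (hconv : Convex ℝ K)
    (x : Eu 2) (hx : x ∈ Set.extremePoints ℝ K) :
    ¬ IsExposedFace K {x} ↔
      (Module.finrank ℝ (Submodule.span ℝ (normalCone K x)) = 1 ∧
       ∃! s : Set (Eu 2), IsFace K s ∧
         Module.finrank ℝ (affineSpan ℝ s).direction = 1 ∧ x ∈ s) := by
  have hxK : x ∈ K := hx.1
  constructor
  · intro hne
    obtain ⟨u, hu0, hu⟩ := exists_ne_zero_mem_normalCone hconv hxK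
      (disjoint_right.1 (disjoint_interior_extremePoints K) hx)
    have hN : span ℝ (normalCone K x) = ℝ ∙ u := le_antisymm
      (span_le.2 fun w hw => by_contra fun hwu =>
        hne (isExposedFace_singleton_of_notMem_span hK hxK hu0 hu hw hwu))
      ((span_singleton_le_iff_mem _ _).2 (subset_span hu))
    have hne' : supportSet K x u ≠ {x} := fun h =>
      hne ((isExposedFace_singleton_iff hK hxK).2 ⟨u, hu0, hu, h⟩)
    refine ⟨by rw [hN, finrank_span_singleton hu0], supportSet K x u,
      ⟨isFace_supportSet hconv hu, finrank_direction_supportSet_eq_one hu0 hxK hne', hxK, rfl⟩,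
      ?_⟩
    rintro s ⟨hs, hsd, hxs⟩
    obtain ⟨w, hw0, hw, rfl⟩ := exists_mem_normalCone_supportSet_eq hconv hs hsd hxs
    exact supportSet_eq_of_mem_span hw0 (hN ▸ subset_span hw)
  · rintro ⟨hdim, s, ⟨hs, hsd, hxs⟩, -⟩ hexp
    obtain ⟨v, hv0, hv, hvx⟩ := (isExposedFace_singleton_iff hK hxK).1 hexp
    obtain ⟨w, hw0, hw, rfl⟩ := exists_mem_normalCone_supportSet_eq hconv hs hsd hxs
    have hN : ℝ ∙ v = span ℝ (normalCone K x) :=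
      eq_of_le_of_finrank_eq ((span_singleton_le_iff_mem _ _).2 (subset_span hv))
        (by rw [finrank_span_singleton hv0, hdim])
    rw [supportSet_eq_of_mem_span hw0 (hN ▸ subset_span hw), hvx] at hsd
    rw [direction_affineSpan, vectorSpan_singleton, finrank_bot] at hsd
    exact zero_ne_one hsd
end
end

section
/- Let K ⊆ ℝ² be a convex body with 0 ∈ int(K). An exposed point x of K is a polyhedral corner (both one-dimensional faces of the normal cone N(x) are normal cones of K) if and only if x is the intersection of two distinct segments (one-dimensional faces) of K. -/
open RealInnerProductSpace Set
open scoped ENNReal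

noncomputable section

/-!
Since `0 ∈ int K`, some `ε > 0` gives `ε ‖u‖ ≤ ⟪u, x⟫` for all `u ∈ N(x)`. Hence `N(x)` is a
salient closed convex cone with the compact convex base `B = {u ∈ N(x) | ⟪u, x⟫ = 1}`, and the ray
through an extreme point of `B` is a face of `N(x)`.

If `x` is a polyhedral corner, `B` is not a point, so by Krein–Milman it has two extreme points
`a ≠ b`; they are linearly independent. Each ray `ℝ≥0 a` is the normal cone of a face of `K`,
which contains a point `y ≠ x` (otherwise the ray would be all of `N(x)`), and then
`⟪a, y - x⟫ = 0`. The exposed faces `{z ∈ K | ⟪a, z - x⟫ = 0}` and `{z ∈ K | ⟪b, z - x⟫ = 0}`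
are therefore two segments through `x` meeting only at `x`.

Conversely, a segment of `K` has a common outer normal, namely one supporting `K` at its midpoint.
Two segments meeting only at `x` have independent normals `u₁, u₂`, and `N(x)` is the cone they
span. A one-dimensional face of a salient cone is a ray, and here it must be `ℝ≥0 u₁` or
`ℝ≥0 u₂`: the intersection of the normal cones along the first or the second segment.
-/

section NormalCone

variable {n : ℕ} {K : Set (Eu n)} {x y m u : Eu n}

lemma smul_mem_normalCone_s18 {t : ℝ} (ht : 0 ≤ t) (hu : u ∈ normalCone K x) :
    t • u ∈ normalCone K x := fun y hy => by
  rw [real_inner_smul_left]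
  exact mul_nonpos_of_nonneg_of_nonpos ht (hu y hy)

lemma convex_normalCone : Convex ℝ (normalCone K x) := by
  intro p hp q hq a b ha hb _ y hy
  rw [inner_add_left, real_inner_smul_left, real_inner_smul_left]
  exact add_nonpos (mul_nonpos_of_nonneg_of_nonpos ha (hp y hy))
    (mul_nonpos_of_nonneg_of_nonpos hb (hq y hy))

lemma isClosed_normalCone : IsClosed (normalCone K x) := by
  simp only [normalCone, ofPred_forall]
  exact isClosed_biInter fun y _ =>
    isClosed_le (continuous_id.inner continuous_const) continuous_const

lemma inner_sub_eq_zero_of_mem_normalCone (hx : x ∈ K) (hy : y ∈ K)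
    (hux : u ∈ normalCone K x) (huy : u ∈ normalCone K y) : ⟪u, y - x⟫ = 0 := by
  have := huy x hx
  rw [← neg_sub, inner_neg_right] at this
  linarith [hux y hy]

lemma mem_normalCone_of_inner_sub_eq_zero (hu : u ∈ normalCone K x) (h : ⟪u, y - x⟫ = 0) :
    u ∈ normalCone K y := fun z hz => by
  rw [← sub_sub_sub_cancel_right z y x, inner_sub_right, h, sub_zero]
  exact hu z hz

/-- Testing `u ∈ N(x)` against the point `ε • u / ‖u‖` of a ball `B(0, ε) ⊆ K`. -/
lemma exists_pos_mul_norm_le_inner (h0 : (0 : Eu n) ∈ interior K) :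
    ∃ ε > 0, ∀ u ∈ normalCone K x, ε * ‖u‖ ≤ ⟪u, x⟫ := by
  obtain ⟨ε, hε, hball⟩ :=
    Metric.nhds_basis_closedBall.mem_iff.1 (mem_interior_iff_mem_nhds.1 h0)
  refine ⟨ε, hε, fun u hu => ?_⟩
  rcases eq_or_ne u 0 with rfl | hu0
  · simp
  have hnorm : 0 < ‖u‖ := norm_pos_iff.2 hu0
  have hyK : (ε / ‖u‖) • u ∈ K := hball (by
    rw [Metric.mem_closedBall, dist_zero_right, norm_smul, Real.norm_eq_abs,
      abs_of_pos (by positivity), div_mul_cancel₀ _ hnorm.ne'])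
  have := hu _ hyK
  rw [inner_sub_right, real_inner_smul_right, real_inner_self_eq_norm_sq] at this
  have hsq : ε / ‖u‖ * ‖u‖ ^ 2 = ε * ‖u‖ := by field_simp
  linarith

lemma eq_zero_of_mem_normalCone_of_neg_mem (h0 : (0 : Eu n) ∈ interior K)
    (hu : u ∈ normalCone K x) (hu' : -u ∈ normalCone K x) : u = 0 := by
  obtain ⟨ε, hε, hpos⟩ := exists_pos_mul_norm_le_inner (x := x) h0
  have h₁ := hpos u hu
  have h₂ := hpos (-u) hu'
  rw [norm_neg, inner_neg_left] at h₂
  exact norm_le_zero_iff.1 (by nlinarith)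

lemma inner_smul_add_smul_sub {a b : ℝ} (hab : a + b = 1) (u p q x : Eu n) :
    ⟪u, a • p + b • q - x⟫ = a * ⟪u, p - x⟫ + b * ⟪u, q - x⟫ := by
  simp only [inner_sub_right, inner_add_right, real_inner_smul_right]
  linear_combination ⟪u, x⟫ * hab

lemma isFace_setOf_inner_sub_eq_zero (hconv : Convex ℝ K) (hu : u ∈ normalCone K x) :
    IsFace K {z ∈ K | ⟪u, z - x⟫ = 0} := by
  refine ⟨sep_subset _ _, ?_, ?_⟩
  · rintro p ⟨hp, hp0⟩ q ⟨hq, hq0⟩ a b ha hb hab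
    exact ⟨hconv hp hq ha hb hab, by
      show ⟪u, _⟫ = 0
      rw [inner_smul_add_smul_sub hab, hp0, hq0]; ring⟩
  · rintro p hp q hq y ⟨-, hy0⟩ ⟨a, b, ha, hb, hab, rfl⟩
    rw [inner_smul_add_smul_sub hab] at hy0
    have hp' := hu p hp
    have hq' := hu q hq
    exact ⟨⟨hp, by nlinarith⟩, ⟨hq, by nlinarith⟩⟩

lemma exists_ne_zero_mem_normalCone_s18 (hconv : Convex ℝ K) (hint : (interior K).Nonempty)
    (hm : m ∉ interior K) : ∃ u ≠ 0, u ∈ normalCone K m := by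
  obtain ⟨f, c, hf0, hfK, hfm⟩ := geometric_hahn_banach_of_nonempty_interior hconv
    (convex_singleton m) (disjoint_singleton_right.2 hm) hint (singleton_nonempty m)
  refine ⟨(InnerProductSpace.toDual ℝ (Eu n)).symm f, by simpa using hf0, fun y hy => ?_⟩
  rw [InnerProductSpace.toDual_symm_apply, map_sub]
  linarith [hfK y hy, hfm m rfl]

lemma IsFace.subset_of_mem_interior {s : Set (Eu n)} (hs : IsFace K s) (hm : m ∈ s)
    (hmK : m ∈ interior K) : K ⊆ s := by
  intro z hz
  have hcont : Continuous fun t : ℝ => m + t • (m - z) := by fun_prop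
  have hnear : ∀ᶠ t in nhdsWithin (0 : ℝ) (Ioi 0), m + t • (m - z) ∈ K := by
    refine eventually_nhdsWithin_of_eventually_nhds (hcont.tendsto' 0 m ?_ |>.eventually
      (mem_interior_iff_mem_nhds.1 hmK))
    simp
  obtain ⟨t, htK, ht⟩ := (hnear.and self_mem_nhdsWithin).exists
  have ht : 0 < t := ht
  refine (hs.2.2 z hz _ htK m hm ⟨t / (1 + t), 1 / (1 + t), by positivity, by positivity,
    by field_simp; ring, ?_⟩).1
  match_scalars <;> field_simp; ring

end NormalCone

section Plane

lemma exists_eq_smul_of_inner_eq_zero {u v w : Eu 2} (hu : u ≠ 0) (hv : v ≠ 0)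
    (huv : ⟪u, v⟫ = 0) (huw : ⟪u, w⟫ = 0) : ∃ t : ℝ, w = t • v := by
  have hperp : (ℝ ∙ u)ᗮ = ℝ ∙ v := by
    refine (Submodule.eq_of_le_of_finrank_le ?_ ?_).symm
    · exact (Submodule.span_singleton_le_iff_mem _ _).2
        (Submodule.mem_orthogonal_singleton_iff_inner_right.2 huv)
    · have := (ℝ ∙ u).finrank_add_finrank_orthogonal
      rw [finrank_span_singleton hu, finrank_euclideanSpace_fin] at this
      rw [finrank_span_singleton hv]
      omega
  obtain ⟨t, ht⟩ := Submodule.mem_span_singleton.1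
    (hperp ▸ Submodule.mem_orthogonal_singleton_iff_inner_right.2 huw)
  exact ⟨t, ht.symm⟩

lemma eq_zero_of_inner_eq_zero_of_linearIndependent {a b v : Eu 2}
    (hab : LinearIndependent ℝ ![a, b]) (ha : ⟪a, v⟫ = 0) (hb : ⟪b, v⟫ = 0) : v = 0 := by
  by_contra hv
  have ha0 : a ≠ 0 := hab.ne_zero 0
  obtain ⟨t, ht⟩ := exists_eq_smul_of_inner_eq_zero hv ha0
    (by rwa [real_inner_comm]) (by rwa [real_inner_comm])
  exact (LinearIndependent.pair_iff' ha0).1 hab t ht.symm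

lemma span_pair_eq_top {a b : Eu 2} (hab : LinearIndependent ℝ ![a, b]) :
    Submodule.span ℝ {a, b} = ⊤ := by
  have := hab.span_eq_top_of_card_eq_finrank (by simp)
  rwa [Matrix.range_cons, Matrix.range_cons, Matrix.range_empty, union_empty,
    singleton_union] at this

end Plane

section Cone

variable {n : ℕ}

def ray (a : Eu n) : Set (Eu n) := {w | ∃ t : ℝ, 0 ≤ t ∧ w = t • a}

lemma self_mem_ray (a : Eu n) : a ∈ ray a := ⟨1, zero_le_one, (one_smul ℝ a).symm⟩

lemma zero_mem_ray (a : Eu n) : (0 : Eu n) ∈ ray a := ⟨0, le_rfl, (zero_smul ℝ a).symm⟩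

lemma ray_smul {a : Eu n} {c : ℝ} (hc : 0 < c) : ray (c • a) = ray a := by
  ext w
  constructor
  · rintro ⟨t, ht, rfl⟩
    exact ⟨t * c, by positivity, (mul_smul t c a).symm⟩
  · rintro ⟨t, ht, rfl⟩
    exact ⟨t / c, by positivity, by rw [smul_smul, div_mul_cancel₀ t hc.ne']⟩

lemma convex_ray (a : Eu n) : Convex ℝ (ray a) := by
  rintro _ ⟨t, ht, rfl⟩ _ ⟨t', ht', rfl⟩ c c' hc hc' -
  exact ⟨c * t + c' * t', by positivity, by rw [smul_smul, smul_smul, add_smul]⟩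

lemma span_ray (a : Eu n) : Submodule.span ℝ (ray a) = ℝ ∙ a := by
  refine le_antisymm (Submodule.span_le.2 ?_) (Submodule.span_mono (by simpa using self_mem_ray a))
  rintro _ ⟨t, -, rfl⟩
  exact Submodule.smul_mem _ t (Submodule.mem_span_singleton_self a)

lemma finrank_span_ray {a : Eu n} (ha : a ≠ 0) :
    Module.finrank ℝ (Submodule.span ℝ (ray a)) = 1 := by
  rw [span_ray, finrank_span_singleton ha]

variable {C : Set (Eu n)}

lemma ray_subset (hsmul : ∀ t : ℝ, 0 ≤ t → ∀ u ∈ C, t • u ∈ C) {a : Eu n} (ha : a ∈ C) :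
    ray a ⊆ C := by
  rintro _ ⟨t, ht, rfl⟩
  exact hsmul t ht a ha

lemma neg_mem_of_smul_mem (hsmul : ∀ t : ℝ, 0 ≤ t → ∀ u ∈ C, t • u ∈ C) {c : ℝ}
    (hc : c < 0) {v : Eu n} (hv : c • v ∈ C) : -v ∈ C := by
  have := hsmul (-c)⁻¹ (inv_nonneg.2 (neg_nonneg.2 hc.le)) _ hv
  rwa [smul_smul, inv_mul_eq_div, div_neg, div_self hc.ne, neg_one_smul] at this

lemma IsFace.eq_ray_of_finrank_span_eq_one (hsmul : ∀ t : ℝ, 0 ≤ t → ∀ u ∈ C, t • u ∈ C)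
    (hsal : ∀ u ∈ C, -u ∈ C → u = 0) {r : Set (Eu n)}
    (hr : IsFace C r) (hr1 : Module.finrank ℝ (Submodule.span ℝ r) = 1) :
    ∃ v ≠ 0, r = ray v := by
  obtain ⟨v, hv, hv0⟩ : ∃ v ∈ r, v ≠ 0 := by
    by_contra! h
    rw [Submodule.span_eq_bot.2 h, finrank_bot] at hr1
    exact zero_ne_one hr1
  have hspan : ℝ ∙ v = Submodule.span ℝ r :=
    Submodule.eq_of_le_of_finrank_le (Submodule.span_mono (by simpa using hv))
      (by rw [hr1, finrank_span_singleton hv0])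
  refine ⟨v, hv0, Subset.antisymm (fun w hw => ?_) ?_⟩
  · obtain ⟨c, rfl⟩ := Submodule.mem_span_singleton.1 (hspan ▸ Submodule.subset_span hw)
    exact ⟨c, not_lt.1 fun hc =>
      hv0 (hsal v (hr.1 hv) (neg_mem_of_smul_mem hsmul hc (hr.1 hw))), rfl⟩
  · rintro _ ⟨t, ht, rfl⟩
    -- `v` is interior to the segment from `0` to `(t + 2) • v`, so both ends lie in the face
    have hseg : v ∈ openSegment ℝ 0 ((t + 2) • v) :=
      ⟨(t + 1) / (t + 2), 1 / (t + 2), by positivity, by positivity, by field_simp; ring, by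
        rw [smul_zero, zero_add, smul_smul, div_mul_cancel₀ _ (by positivity), one_smul]⟩
    obtain ⟨h0r, htr⟩ := hr.2.2 0 (by simpa using hsmul 0 le_rfl v (hr.1 hv)) _
      (hsmul _ (by positivity) v (hr.1 hv)) v hv hseg
    convert hr.2.1 h0r htr (by positivity : (0 : ℝ) ≤ 2 / (t + 2))
      (by positivity : (0 : ℝ) ≤ t / (t + 2)) (by field_simp; ring) using 1
    rw [smul_zero, zero_add, smul_smul, div_mul_cancel₀ _ (by positivity)]

lemma ray_eq_or_ray_eq_of_isFace {u₁ u₂ v : Eu n} (hind : LinearIndependent ℝ ![u₁, u₂])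
    (hu₁ : u₁ ∈ C) (hu₂ : u₂ ∈ C) (hC : ∀ u ∈ C, ∃ a b : ℝ, 0 ≤ a ∧ 0 ≤ b ∧ u = a • u₁ + b • u₂)
    (hv : v ≠ 0) (hface : IsFace C (ray v)) : ray v = ray u₁ ∨ ray v = ray u₂ := by
  have hu₁0 : u₁ ≠ 0 := by simpa using hind.ne_zero 0
  obtain ⟨a, b, ha, hb, hvab⟩ := hC v (hface.1 (self_mem_ray v))
  rcases ha.eq_or_lt with rfl | ha
  · rw [zero_smul, zero_add] at hvab
    have hb : 0 < b := hb.lt_of_ne fun h => hv (by rw [hvab, ← h, zero_smul])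
    exact Or.inr (by rw [hvab, ray_smul hb])
  rcases hb.eq_or_lt with rfl | hb
  · rw [zero_smul, add_zero] at hvab
    exact Or.inl (by rw [hvab, ray_smul ha])
  -- otherwise `v / (a + b)` lies strictly between `u₁` and `u₂`, which forces both onto `ray v`
  have hseg : (a + b)⁻¹ • v ∈ openSegment ℝ u₁ u₂ :=
    ⟨a / (a + b), b / (a + b), by positivity, by positivity, by field_simp, by
      rw [hvab, smul_add, smul_smul, smul_smul, div_eq_inv_mul, div_eq_inv_mul]⟩
  obtain ⟨⟨s, -, hs⟩, ⟨s', -, hs'⟩⟩ :=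
    hface.2.2 u₁ hu₁ u₂ hu₂ _ ⟨(a + b)⁻¹, by positivity, rfl⟩ hseg
  have hs0 : s ≠ 0 := by
    rintro rfl
    exact hu₁0 (by rw [hs, zero_smul])
  exact ((LinearIndependent.pair_iff' hu₁0).1 hind (s' / s)
    (by rw [hs, hs', smul_smul, div_mul_cancel₀ _ hs0])).elim

end Cone

lemma exists_ne_mem_extremePoints {E : Type*} [AddCommGroup E] [Module ℝ E] [TopologicalSpace E]
    [T2Space E] [IsTopologicalAddGroup E] [ContinuousSMul ℝ E] [LocallyConvexSpace ℝ E]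
    {B : Set E} (hB : IsCompact B) (hconv : Convex ℝ B) (hB2 : ¬ B.Subsingleton) :
    ∃ a ∈ B.extremePoints ℝ, ∃ b ∈ B.extremePoints ℝ, a ≠ b := by
  by_contra! h
  refine hB2 ?_
  rw [← closure_convexHull_extremePoints hB hconv]
  rcases Set.Subsingleton.eq_empty_or_singleton h with he | ⟨a, ha⟩
  · simp [he]
  · simp [ha]

section Base

variable {n : ℕ} {C : Set (Eu n)} {w : Eu n}

lemma inv_inner_smul_mem_base (hsmul : ∀ t : ℝ, 0 ≤ t → ∀ u ∈ C, t • u ∈ C) {u : Eu n}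
    (hu : u ∈ C) (hpos : 0 < ⟪u, w⟫) : ⟪u, w⟫⁻¹ • u ∈ {v ∈ C | ⟪v, w⟫ = 1} :=
  ⟨hsmul _ (inv_nonneg.2 hpos.le) u hu, by
    rw [real_inner_smul_left, inv_mul_cancel₀ hpos.ne']⟩

lemma isFace_ray_of_mem_extremePoints (hsmul : ∀ t : ℝ, 0 ≤ t → ∀ u ∈ C, t • u ∈ C)
    (hpos : ∀ u ∈ C, u ≠ 0 → 0 < ⟪u, w⟫) {a : Eu n}
    (ha : a ∈ {u ∈ C | ⟪u, w⟫ = 1}.extremePoints ℝ) : IsFace C (ray a) := by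
  obtain ⟨⟨haC, haw⟩, hext⟩ := mem_extremePoints.1 ha
  refine ⟨ray_subset hsmul haC, convex_ray a, ?_⟩
  rintro p hp q hq _ ⟨s, hs, rfl⟩ ⟨α, β, hα, hβ, hαβ, hpq⟩
  rcases eq_or_ne p 0 with rfl | hp0
  · rw [smul_zero, zero_add] at hpq
    refine ⟨zero_mem_ray a, s / β, by positivity, ?_⟩
    rw [div_eq_inv_mul, mul_smul, ← hpq, smul_smul, inv_mul_cancel₀ hβ.ne', one_smul]
  rcases eq_or_ne q 0 with rfl | hq0
  · rw [smul_zero, add_zero] at hpq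
    refine ⟨⟨s / α, by positivity, ?_⟩, zero_mem_ray a⟩
    rw [div_eq_inv_mul, mul_smul, ← hpq, smul_smul, inv_mul_cancel₀ hα.ne', one_smul]
  have hpw := hpos p hp hp0
  have hqw := hpos q hq hq0
  have hsum : α * ⟪p, w⟫ + β * ⟪q, w⟫ = s := by
    have := congrArg (⟪·, w⟫) hpq
    simpa only [inner_add_left, real_inner_smul_left, haw, mul_one] using this
  have hs : 0 < s := hsum ▸ by positivity
  have hseg : a ∈ openSegment ℝ (⟪p, w⟫⁻¹ • p) (⟪q, w⟫⁻¹ • q) := by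
    refine ⟨α * ⟪p, w⟫ / s, β * ⟪q, w⟫ / s, by positivity, by positivity, by
      rw [← add_div, hsum, div_self hs.ne'], ?_⟩
    rw [smul_smul, smul_smul, show α * ⟪p, w⟫ / s * ⟪p, w⟫⁻¹ = s⁻¹ * α by field_simp,
      show β * ⟪q, w⟫ / s * ⟪q, w⟫⁻¹ = s⁻¹ * β by field_simp, mul_smul, mul_smul, ← smul_add,
      hpq, smul_smul, inv_mul_cancel₀ hs.ne', one_smul]
  obtain ⟨hpa, hqa⟩ := hext _ (inv_inner_smul_mem_base hsmul hp hpw) _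
    (inv_inner_smul_mem_base hsmul hq hqw) hseg
  refine ⟨⟨⟪p, w⟫, hpw.le, ?_⟩, ⟨⟪q, w⟫, hqw.le, ?_⟩⟩
  · rw [← hpa, smul_smul, mul_inv_cancel₀ hpw.ne', one_smul]
  · rw [← hqa, smul_smul, mul_inv_cancel₀ hqw.ne', one_smul]

lemma isCompact_base (hcl : IsClosed C) {ε : ℝ} (hε : 0 < ε) (hw : ∀ u ∈ C, ε * ‖u‖ ≤ ⟪u, w⟫) :
    IsCompact {u ∈ C | ⟪u, w⟫ = 1} := by
  refine Metric.isCompact_of_isClosed_isBounded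
    (hcl.inter (isClosed_eq (continuous_id.inner continuous_const) continuous_const)) ?_
  refine isBounded_iff_forall_norm_le.2 ⟨ε⁻¹, fun u hu => ?_⟩
  have := hw u hu.1
  rw [hu.2] at this
  rwa [← one_div, le_div_iff₀ hε, mul_comm]

lemma convex_base (hconv : Convex ℝ C) : Convex ℝ {u ∈ C | ⟪u, w⟫ = 1} := by
  refine hconv.inter fun p hp q hq a b _ _ hab => ?_
  change ⟪p, w⟫ = 1 at hp
  change ⟪q, w⟫ = 1 at hq
  change ⟪a • p + b • q, w⟫ = 1
  rw [inner_add_left, real_inner_smul_left, real_inner_smul_left, hp, hq, mul_one, mul_one, hab]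

lemma not_subsingleton_base (hsmul : ∀ t : ℝ, 0 ≤ t → ∀ u ∈ C, t • u ∈ C)
    (hpos : ∀ u ∈ C, u ≠ 0 → 0 < ⟪u, w⟫) (hC : 1 < Module.finrank ℝ (Submodule.span ℝ C)) :
    ¬ {u ∈ C | ⟪u, w⟫ = 1}.Subsingleton := by
  intro hsub
  obtain ⟨P, hP⟩ : ∃ P, {u ∈ C | ⟪u, w⟫ = 1} ⊆ {P} := by
    rcases hsub.eq_empty_or_singleton with h | ⟨P, h⟩
    exacts [⟨0, h ▸ empty_subset _⟩, ⟨P, h.le⟩]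
  have hCP : Submodule.span ℝ C ≤ ℝ ∙ P := by
    refine Submodule.span_le.2 fun u hu => ?_
    rcases eq_or_ne u 0 with rfl | hu0
    · exact zero_mem _
    have huP : ⟪u, w⟫⁻¹ • u = P := hP (inv_inner_smul_mem_base hsmul hu (hpos u hu hu0))
    refine Submodule.mem_span_singleton.2 ⟨⟪u, w⟫, ?_⟩
    rw [← huP, smul_smul, mul_inv_cancel₀ (hpos u hu hu0).ne', one_smul]
  have := (Submodule.finrank_mono hCP).trans (finrank_span_le_card ({P} : Set (Eu n)))
  simp only [toFinset_singleton, Finset.card_singleton] at this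
  omega

lemma exists_ne_isFace_ray (hcl : IsClosed C) (hconv : Convex ℝ C)
    (hsmul : ∀ t : ℝ, 0 ≤ t → ∀ u ∈ C, t • u ∈ C) {ε : ℝ} (hε : 0 < ε)
    (hw : ∀ u ∈ C, ε * ‖u‖ ≤ ⟪u, w⟫) (hC : 1 < Module.finrank ℝ (Submodule.span ℝ C)) :
    ∃ a b : Eu n, a ≠ b ∧ ⟪a, w⟫ = 1 ∧ ⟪b, w⟫ = 1 ∧ IsFace C (ray a) ∧ IsFace C (ray b) := by
  have hpos : ∀ u ∈ C, u ≠ 0 → 0 < ⟪u, w⟫ := fun u hu hu0 =>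
    (mul_pos hε (norm_pos_iff.2 hu0)).trans_le (hw u hu)
  obtain ⟨a, ha, b, hb, hab⟩ := exists_ne_mem_extremePoints (isCompact_base hcl hε hw)
    (convex_base hconv) (not_subsingleton_base hsmul hpos hC)
  exact ⟨a, b, hab, (extremePoints_subset ha).2, (extremePoints_subset hb).2,
    isFace_ray_of_mem_extremePoints hsmul hpos ha, isFace_ray_of_mem_extremePoints hsmul hpos hb⟩

end Base

section Segment

variable {n : ℕ} {K s : Set (Eu n)}

def IsSegment (K s : Set (Eu n)) : Prop :=
  IsFace K s ∧ Module.finrank ℝ (affineSpan ℝ s).direction = 1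

lemma isSegment_iff : IsSegment K s ↔ IsFace K s ∧ Collinear ℝ s ∧ s.Nontrivial := by
  rw [IsSegment, ← not_subsingleton_iff, ← vectorSpan_eq_bot_iff_subsingleton ℝ,
    collinear_iff_finrank_le_one, direction_affineSpan, ← Submodule.finrank_eq_zero]
  exact and_congr_right fun _ => by omega

/-- A normal `u` supporting `K` at the midpoint `m` of two points of `s` works: `⟪u, · - m⟫ ≤ 0`
is linear along the line of `s` and vanishes at the point `m` strictly inside it. -/
lemma IsFace.exists_common_normal (hconv : Convex ℝ K) (hint : (interior K).Nonempty)
    (hs : IsFace K s) (hcol : Collinear ℝ s) (hnt : s.Nontrivial) (hKs : ¬ K ⊆ s) :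
    ∃ u ≠ 0, ∀ z ∈ s, u ∈ normalCone K z := by
  obtain ⟨x, hx, y, hy, hxy⟩ := hnt
  have hm : midpoint ℝ x y ∈ s := hs.2.1.midpoint_mem hx hy
  obtain ⟨u, hu0, hu⟩ := exists_ne_zero_mem_normalCone_s18 hconv hint
    fun hmK => hKs (hs.subset_of_mem_interior hm hmK)
  obtain ⟨v, hv⟩ := (collinear_iff_of_mem hm).1 hcol
  have huv : ⟪u, v⟫ = 0 := by
    obtain ⟨r, hr⟩ := hv x hx
    have hxm : x - midpoint ℝ x y = r • v := (eq_vadd_iff_vsub_eq _ _ _).1 hr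
    have hym : y - midpoint ℝ x y = -(r • v) := by
      rw [← hxm, left_sub_midpoint, right_sub_midpoint, ← smul_neg, neg_sub]
    have hr0 : r ≠ 0 := by
      rintro rfl
      rw [zero_smul, sub_eq_zero, left_eq_midpoint_iff] at hxm
      exact hxy hxm
    have h₁ := hu x (hs.1 hx)
    have h₂ := hu y (hs.1 hy)
    rw [hxm, real_inner_smul_right] at h₁
    rw [hym, inner_neg_right, real_inner_smul_right] at h₂
    exact (mul_eq_zero.1 (by linarith)).resolve_left hr0
  refine ⟨u, hu0, fun z hz => ?_⟩
  obtain ⟨r, rfl⟩ := hv z hz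
  refine mem_normalCone_of_inner_sub_eq_zero hu ?_
  rw [vadd_eq_add, add_sub_cancel_right, real_inner_smul_right, huv, mul_zero]

lemma IsFace.eq_of_sub_eq_smul {s₁ s₂ : Set (Eu n)} {x y₁ y₂ : Eu n} {t : ℝ}
    (hs₁ : IsFace K s₁) (hs₂ : IsFace K s₂) (hcap : s₁ ∩ s₂ ⊆ {x}) (hx₁ : x ∈ s₁)
    (hx₂ : x ∈ s₂) (hy₁ : y₁ ∈ s₁) (hy₂ : y₂ ∈ s₂) (h : y₂ - x = t • (y₁ - x)) : y₂ = x := by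
  rw [sub_eq_iff_eq_add] at h
  rcases lt_or_ge t 0 with ht | ht
  · have h1t : 0 < 1 - t := by linarith
    have hseg : x ∈ openSegment ℝ y₁ y₂ := by
      refine ⟨-t / (1 - t), 1 / (1 - t), div_pos (by linarith) h1t, div_pos one_pos h1t,
        by field_simp; ring, ?_⟩
      rw [h]
      match_scalars <;> field_simp <;> ring
    exact hcap ⟨(hs₁.2.2 y₁ (hs₁.1 hy₁) y₂ (hs₂.1 hy₂) x hx₁ hseg).2, hy₂⟩
  rcases le_total t 1 with ht1 | ht1
  · refine hcap ⟨?_, hy₂⟩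
    convert hs₁.2.1 hx₁ hy₁ (sub_nonneg.2 ht1) ht (by ring) using 1
    rw [h]
    module
  · have hy₁x : y₁ = x := by
      refine hcap ⟨hy₁, ?_⟩
      have ht0 : 0 < t := by linarith
      convert hs₂.2.1 hx₂ hy₂ (sub_nonneg.2 (inv_le_one_of_one_le₀ ht1))
        (inv_nonneg.2 ht) (by ring) using 1
      rw [h]
      match_scalars <;> field_simp; ring
    rw [h, hy₁x, sub_self, smul_zero, zero_add]

end Segment

section Corner

variable {K : Set (Eu 2)} {x : Eu 2}

def IsPolyhedralCorner (K : Set (Eu 2)) (x : Eu 2) : Prop :=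
  Module.finrank ℝ (Submodule.span ℝ (normalCone K x)) = 2 ∧
    ∀ r : Set (Eu 2), IsFace (normalCone K x) r → Module.finrank ℝ (Submodule.span ℝ r) = 1 →
      ∃ s : Set (Eu 2), IsFace K s ∧ s.Nonempty ∧ r = ⋂ y ∈ s, normalCone K y

lemma IsSegment.exists_common_normal {s : Set (Eu 2)} (hconv : Convex ℝ K)
    (hint : (interior K).Nonempty) (hs : IsSegment K s) :
    ∃ u ≠ 0, ∀ z ∈ s, u ∈ normalCone K z := by
  obtain ⟨hface, hcol, hnt⟩ := isSegment_iff.1 hs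
  refine hface.exists_common_normal hconv hint hcol hnt fun hKs => ?_
  have hK : affineSpan ℝ K = ⊤ :=
    affineSpan_eq_top_of_nonempty_interior (hint.mono (interior_mono (subset_convexHull ℝ K)))
  have htop : affineSpan ℝ s = ⊤ := top_le_iff.1 (hK.ge.trans (affineSpan_mono ℝ hKs))
  have := hs.2
  rw [htop, AffineSubspace.direction_top, finrank_top, finrank_euclideanSpace_fin] at this
  exact absurd this (by norm_num)

lemma isSegment_setOf_inner_sub_eq_zero (hconv : Convex ℝ K) {a y : Eu 2}
    (ha : a ∈ normalCone K x) (ha0 : a ≠ 0) (hx : x ∈ K) (hy : y ∈ K) (hyx : y ≠ x)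
    (hay : ⟪a, y - x⟫ = 0) : IsSegment K {z ∈ K | ⟪a, z - x⟫ = 0} := by
  have hxS : x ∈ {z ∈ K | ⟪a, z - x⟫ = 0} := ⟨hx, by rw [sub_self, inner_zero_right]⟩
  refine isSegment_iff.2 ⟨isFace_setOf_inner_sub_eq_zero hconv ha,
    (collinear_iff_of_mem hxS).2 ⟨y - x, fun z hz => ?_⟩, ⟨x, hxS, y, ⟨hy, hay⟩, hyx.symm⟩⟩
  obtain ⟨t, ht⟩ := exists_eq_smul_of_inner_eq_zero ha0 (sub_ne_zero.2 hyx) hay hz.2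
  exact ⟨t, by rw [← ht, vadd_eq_add, sub_add_cancel]⟩

lemma linearIndependent_of_isFace_inter {s₁ s₂ : Set (Eu 2)} {y₁ y₂ u₁ u₂ : Eu 2}
    (hs₁ : IsFace K s₁) (hs₂ : IsFace K s₂) (hcap : s₁ ∩ s₂ ⊆ {x}) (hx₁ : x ∈ s₁)
    (hx₂ : x ∈ s₂) (hy₁ : y₁ ∈ s₁) (hy₂ : y₂ ∈ s₂) (hy₁x : y₁ ≠ x) (hy₂x : y₂ ≠ x)
    (hu₁ : u₁ ≠ 0) (hu₂ : u₂ ≠ 0) (h₁ : ⟪u₁, y₁ - x⟫ = 0) (h₂ : ⟪u₂, y₂ - x⟫ = 0) :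
    LinearIndependent ℝ ![u₁, u₂] := by
  refine (LinearIndependent.pair_iff' hu₁).2 fun c hc => hy₂x ?_
  have hc0 : c ≠ 0 := by
    rintro rfl
    exact hu₂ (by rw [← hc, zero_smul])
  rw [← hc, real_inner_smul_left] at h₂
  obtain ⟨t, ht⟩ := exists_eq_smul_of_inner_eq_zero hu₁ (sub_ne_zero.2 hy₁x) h₁
    ((mul_eq_zero.1 h₂).resolve_left hc0)
  exact hs₁.eq_of_sub_eq_smul hs₂ hcap hx₁ hx₂ hy₁ hy₂ ht

lemma inner_sub_lt_zero_of_linearIndependent {y u₁ u₂ : Eu 2}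
    (hind : LinearIndependent ℝ ![u₁, u₂]) (hu₁ : u₁ ∈ normalCone K x) (hy : y ∈ K)
    (hyx : y ≠ x) (h₂ : ⟪u₂, y - x⟫ = 0) : ⟪u₁, y - x⟫ < 0 :=
  (hu₁ y hy).lt_of_ne fun h₁ =>
    hyx (sub_eq_zero.1 (eq_zero_of_inner_eq_zero_of_linearIndependent hind h₁ h₂))

lemma exists_nonneg_smul_add_smul_of_mem_normalCone {y₁ y₂ u₁ u₂ u : Eu 2}
    (hind : LinearIndependent ℝ ![u₁, u₂]) (hu₁ : u₁ ∈ normalCone K x)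
    (hu₂ : u₂ ∈ normalCone K x) (hy₁ : y₁ ∈ K) (hy₂ : y₂ ∈ K) (hy₁x : y₁ ≠ x) (hy₂x : y₂ ≠ x)
    (h₁ : ⟪u₁, y₁ - x⟫ = 0) (h₂ : ⟪u₂, y₂ - x⟫ = 0) (hu : u ∈ normalCone K x) :
    ∃ a b : ℝ, 0 ≤ a ∧ 0 ≤ b ∧ u = a • u₁ + b • u₂ := by
  obtain ⟨a, b, rfl⟩ :=
    Submodule.mem_span_pair.1 ((span_pair_eq_top hind).ge (Submodule.mem_top (x := u)))
  have hlt₁ := inner_sub_lt_zero_of_linearIndependent hind hu₁ hy₂ hy₂x h₂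
  have hlt₂ :=
    inner_sub_lt_zero_of_linearIndependent (LinearIndependent.pair_symm_iff.1 hind) hu₂ hy₁ hy₁x h₁
  have e₁ := hu y₂ hy₂
  have e₂ := hu y₁ hy₁
  simp only [inner_add_left, real_inner_smul_left, h₁, h₂, mul_zero, add_zero, zero_add] at e₁ e₂
  exact ⟨a, b, by nlinarith, by nlinarith, rfl⟩

lemma biInter_normalCone_eq_ray {s : Set (Eu 2)} {y u : Eu 2}
    (hsal : ∀ v ∈ normalCone K x, -v ∈ normalCone K x → v = 0) (hu0 : u ≠ 0) (hsK : s ⊆ K)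
    (hx : x ∈ s) (hy : y ∈ s) (hyx : y ≠ x) (hu : ∀ z ∈ s, u ∈ normalCone K z) :
    ⋂ z ∈ s, normalCone K z = ray u := by
  refine Subset.antisymm (fun v hv => ?_) fun v hv => mem_iInter₂.2 fun z hz =>
    ray_subset (fun t ht _ h => smul_mem_normalCone_s18 ht h) (hu z hz) hv
  rw [mem_iInter₂] at hv
  have h₁ := inner_sub_eq_zero_of_mem_normalCone (hsK hx) (hsK hy) (hu x hx) (hu y hy)
  have h₂ := inner_sub_eq_zero_of_mem_normalCone (hsK hx) (hsK hy) (hv x hx) (hv y hy)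
  rw [real_inner_comm] at h₁ h₂
  obtain ⟨t, rfl⟩ := exists_eq_smul_of_inner_eq_zero (sub_ne_zero.2 hyx) hu0 h₁ h₂
  exact ⟨t, not_lt.1 fun ht => hu0 (hsal u (hu x hx)
    (neg_mem_of_smul_mem (fun t ht _ h => smul_mem_normalCone_s18 ht h) ht (hv x hx))), rfl⟩

theorem IsSegment.isPolyhedralCorner {s₁ s₂ : Set (Eu 2)} (hconv : Convex ℝ K)
    (h0 : (0 : Eu 2) ∈ interior K) (hs₁ : IsSegment K s₁) (hs₂ : IsSegment K s₂)
    (hcap : {x} = s₁ ∩ s₂) : IsPolyhedralCorner K x := by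
  have hx₁ : x ∈ s₁ := (hcap.le rfl).1
  have hx₂ : x ∈ s₂ := (hcap.le rfl).2
  have hsmul : ∀ t : ℝ, 0 ≤ t → ∀ u ∈ normalCone K x, t • u ∈ normalCone K x :=
    fun t ht _ hu => smul_mem_normalCone_s18 ht hu
  have hsal : ∀ u ∈ normalCone K x, -u ∈ normalCone K x → u = 0 :=
    fun _ hu hu' => eq_zero_of_mem_normalCone_of_neg_mem h0 hu hu'
  obtain ⟨u₁, hu₁0, hN₁⟩ := hs₁.exists_common_normal hconv ⟨0, h0⟩
  obtain ⟨u₂, hu₂0, hN₂⟩ := hs₂.exists_common_normal hconv ⟨0, h0⟩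
  obtain ⟨y₁, hy₁, hy₁x⟩ := (isSegment_iff.1 hs₁).2.2.exists_ne x
  obtain ⟨y₂, hy₂, hy₂x⟩ := (isSegment_iff.1 hs₂).2.2.exists_ne x
  have h₁ :=
    inner_sub_eq_zero_of_mem_normalCone (hs₁.1.1 hx₁) (hs₁.1.1 hy₁) (hN₁ x hx₁) (hN₁ y₁ hy₁)
  have h₂ :=
    inner_sub_eq_zero_of_mem_normalCone (hs₂.1.1 hx₂) (hs₂.1.1 hy₂) (hN₂ x hx₂) (hN₂ y₂ hy₂)
  have hind := linearIndependent_of_isFace_inter hs₁.1 hs₂.1 hcap.ge hx₁ hx₂ hy₁ hy₂ hy₁x hy₂x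
    hu₁0 hu₂0 h₁ h₂
  refine ⟨?_, fun r hr hr1 => ?_⟩
  · have hspan : Submodule.span ℝ (normalCone K x) = ⊤ :=
      top_le_iff.1 <| (span_pair_eq_top hind).ge.trans
        (Submodule.span_mono (insert_subset (hN₁ x hx₁) (singleton_subset_iff.2 (hN₂ x hx₂))))
    rw [hspan, finrank_top, finrank_euclideanSpace_fin]
  obtain ⟨v, hv0, rfl⟩ := hr.eq_ray_of_finrank_span_eq_one hsmul hsal hr1
  rcases ray_eq_or_ray_eq_of_isFace hind (hN₁ x hx₁) (hN₂ x hx₂)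
    (fun u hu => exists_nonneg_smul_add_smul_of_mem_normalCone hind (hN₁ x hx₁) (hN₂ x hx₂)
      (hs₁.1.1 hy₁) (hs₂.1.1 hy₂) hy₁x hy₂x h₁ h₂ hu) hv0 hr with h | h
  · exact ⟨s₁, hs₁.1, ⟨x, hx₁⟩,
      by rw [h, biInter_normalCone_eq_ray hsal hu₁0 hs₁.1.1 hx₁ hy₁ hy₁x hN₁]⟩
  · exact ⟨s₂, hs₂.1, ⟨x, hx₂⟩,
      by rw [h, biInter_normalCone_eq_ray hsal hu₂0 hs₂.1.1 hx₂ hy₂ hy₂x hN₂]⟩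

lemma IsPolyhedralCorner.exists_ne_inner_sub_eq_zero (hcorner : IsPolyhedralCorner K x)
    (hx : x ∈ K) {v : Eu 2} (hv0 : v ≠ 0) (hv : IsFace (normalCone K x) (ray v)) :
    ∃ y ∈ K, y ≠ x ∧ ⟪v, y - x⟫ = 0 := by
  obtain ⟨s, hs, hsne, hray⟩ := hcorner.2 _ hv (finrank_span_ray hv0)
  obtain ⟨y, hy, hyx⟩ : ∃ y ∈ s, y ≠ x := by
    by_contra! h
    rw [eq_singleton_iff_nonempty_unique_mem.2 ⟨hsne, h⟩, biInter_singleton] at hray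
    have := hcorner.1
    rw [← hray, finrank_span_ray hv0] at this
    exact absurd this (by norm_num)
  have hvy : v ∈ normalCone K y := mem_iInter₂.1 (hray ▸ self_mem_ray v) y hy
  exact ⟨y, hs.1 hy, hyx,
    inner_sub_eq_zero_of_mem_normalCone hx (hs.1 hy) (hv.1 (self_mem_ray v)) hvy⟩

theorem IsPolyhedralCorner.exists_isSegment (hconv : Convex ℝ K) (h0 : (0 : Eu 2) ∈ interior K)
    (hx : x ∈ K) (hcorner : IsPolyhedralCorner K x) :
    ∃ s₁ s₂, IsSegment K s₁ ∧ IsSegment K s₂ ∧ s₁ ≠ s₂ ∧ {x} = s₁ ∩ s₂ := by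
  obtain ⟨ε, hε, hεx⟩ := exists_pos_mul_norm_le_inner (x := x) h0
  obtain ⟨a, b, hab, hax, hbx, ha, hb⟩ := exists_ne_isFace_ray isClosed_normalCone
    convex_normalCone (fun t ht _ hu => smul_mem_normalCone_s18 ht hu) hε hεx
    (by rw [hcorner.1]; norm_num)
  have ha0 : a ≠ 0 := by rintro rfl; simp at hax
  have hb0 : b ≠ 0 := by rintro rfl; simp at hbx
  have hind : LinearIndependent ℝ ![a, b] := (LinearIndependent.pair_iff' ha0).2 fun c hc => by
    rw [← hc, real_inner_smul_left, hax, mul_one] at hbx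
    rw [hbx, one_smul] at hc
    exact hab hc
  obtain ⟨ya, hya, hyax, hay⟩ := hcorner.exists_ne_inner_sub_eq_zero hx ha0 ha
  obtain ⟨yb, hyb, hybx, hby⟩ := hcorner.exists_ne_inner_sub_eq_zero hx hb0 hb
  refine ⟨_, _, isSegment_setOf_inner_sub_eq_zero hconv (ha.1 (self_mem_ray a)) ha0 hx hya hyax hay,
    isSegment_setOf_inner_sub_eq_zero hconv (hb.1 (self_mem_ray b)) hb0 hx hyb hybx hby,
    fun h => hyax ?_, ?_⟩
  · have hbya : ⟪b, ya - x⟫ = 0 := (h ▸ ⟨hya, hay⟩ : ya ∈ {z ∈ K | ⟪b, z - x⟫ = 0}).2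
    exact sub_eq_zero.1 (eq_zero_of_inner_eq_zero_of_linearIndependent hind hay hbya)
  · ext z
    refine ⟨?_, fun ⟨⟨_, h₁⟩, ⟨_, h₂⟩⟩ => sub_eq_zero.1
      (eq_zero_of_inner_eq_zero_of_linearIndependent hind h₁ h₂)⟩
    rintro rfl
    simp [hx]

end Corner

theorem stmt18_general (K : Set (Eu 2)) (hconv : Convex ℝ K)
    (h0 : (0 : Eu 2) ∈ interior K) (x : Eu 2) (hx : x ∈ K) :
    (Module.finrank ℝ (Submodule.span ℝ (normalCone K x)) = 2 ∧
      ∀ r : Set (Eu 2), IsFace (normalCone K x) r →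
        Module.finrank ℝ (Submodule.span ℝ r) = 1 →
        ∃ s : Set (Eu 2), IsFace K s ∧ s.Nonempty ∧ r = ⋂ y ∈ s, normalCone K y)
    ↔ ∃ s₁ s₂ : Set (Eu 2), IsFace K s₁ ∧ IsFace K s₂ ∧
        Module.finrank ℝ (affineSpan ℝ s₁).direction = 1 ∧
        Module.finrank ℝ (affineSpan ℝ s₂).direction = 1 ∧
        s₁ ≠ s₂ ∧ {x} = s₁ ∩ s₂ := by
  constructor
  · intro hcorner
    obtain ⟨s₁, s₂, ⟨hs₁, hd₁⟩, ⟨hs₂, hd₂⟩, hne, hcap⟩ :=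
      IsPolyhedralCorner.exists_isSegment hconv h0 hx hcorner
    exact ⟨s₁, s₂, hs₁, hs₂, hd₁, hd₂, hne, hcap⟩
  · rintro ⟨s₁, s₂, hs₁, hs₂, hd₁, hd₂, -, hcap⟩
    exact IsSegment.isPolyhedralCorner hconv h0 ⟨hs₁, hd₁⟩ ⟨hs₂, hd₂⟩ hcap

/-- an exposed point `x` of a planar convex body is a polyhedral corner
(its normal cone is two-dimensional and every one-dimensional face of the normal cone
is a normal cone of `K`, i.e. of the form `⋂_{y ∈ s} N(y)` for a nonempty face `s`)
iff `x` is the intersection of two distinct segments of `K`. -/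
theorem stmt18 (K : Set (Eu 2)) (hK : IsCompact K) (hconv : Convex ℝ K)
    (h0 : (0 : Eu 2) ∈ interior K) (x : Eu 2) (hx : x ∈ K)
    (hexp : IsExposedFace K {x}) :
    (Module.finrank ℝ (Submodule.span ℝ (normalCone K x)) = 2 ∧
      ∀ r : Set (Eu 2), IsFace (normalCone K x) r →
        Module.finrank ℝ (Submodule.span ℝ r) = 1 →
        ∃ s : Set (Eu 2), IsFace K s ∧ s.Nonempty ∧ r = ⋂ y ∈ s, normalCone K y)
    ↔ ∃ s₁ s₂ : Set (Eu 2), IsFace K s₁ ∧ IsFace K s₂ ∧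
        Module.finrank ℝ (affineSpan ℝ s₁).direction = 1 ∧
        Module.finrank ℝ (affineSpan ℝ s₂).direction = 1 ∧
        s₁ ≠ s₂ ∧ {x} = s₁ ∩ s₂ :=
  stmt18_general K hconv h0 x hx
end
end
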